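/- arXiv:2206.08652 — 8 statements merged into one kernel-verified Lean document; each statement's English description precedes it below -/
import Mathlib

section
/- For all integers n and m, the Malmquist–Takenaka functions are orthonormal in L²(ℝ, ℂ): ∫_ℝ φ_n(x) · conj(φ_m(x)) dx equals 1 if n = m and 0 otherwise. -/
open Complex MeasureTheory Real Filter Topology

/-- The Malmquist–Takenaka function of index `n : ℤ`. -/
noncomputable def mtf (n : ℤ) (x : ℝ) : ℂ :=
  Complex.I ^ n * (Real.sqrt (2 / Real.pi) : ℂ) *
    (1 + 2 * Complex.I * x) ^ n / (1 - 2 * Complex.I * x) ^ (n + 1)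

lemma plus_ne (x : ℝ) : (1 + 2 * Complex.I * x : ℂ) ≠ 0 := by
  intro h; have := congrArg Complex.re h; simp at this

lemma minus_ne (x : ℝ) : (1 - 2 * Complex.I * x : ℂ) ≠ 0 := by
  intro h; have := congrArg Complex.re h; simp at this

lemma norm_plus (x : ℝ) : ‖(1 + 2 * Complex.I * x : ℂ)‖ = Real.sqrt (1 + 4 * x ^ 2) := by
  rw [Complex.norm_def, Complex.normSq_apply]; simp; ring_nf

lemma norm_minus (x : ℝ) : ‖(1 - 2 * Complex.I * x : ℂ)‖ = Real.sqrt (1 + 4 * x ^ 2) := by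
  rw [Complex.norm_def, Complex.normSq_apply]; simp; ring_nf

/-- The integrand after simplification. -/
noncomputable def mtg (k : ℤ) (x : ℝ) : ℂ :=
  (1 + 2 * Complex.I * x) ^ (k - 1) / (1 - 2 * Complex.I * x) ^ (k + 1)

lemma norm_mtg (k : ℤ) (x : ℝ) : ‖mtg k x‖ = (1 + 4 * x ^ 2)⁻¹ := by
  have h : (0:ℝ) < 1 + 4 * x ^ 2 := by positivity
  rw [mtg, norm_div, norm_zpow, norm_zpow, norm_plus, norm_minus,
    ← zpow_sub₀ (by positivity)]
  have : k - 1 - (k + 1) = -2 := by ring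
  rw [this]
  rw [show (-2 : ℤ) = -(2:ℕ) by norm_num, zpow_neg, zpow_natCast, Real.sq_sqrt h.le]

lemma integrable_inv_one_add_four_sq : Integrable (fun x : ℝ => (1 + 4 * x ^ 2)⁻¹) := by
  have := integrable_inv_one_add_sq.comp_mul_left' (two_ne_zero)
  refine this.congr ?_
  filter_upwards with x
  norm_num; ring_nf

lemma integrable_mtg (k : ℤ) : Integrable (mtg k) := by
  have hc : Continuous (mtg k) := by
    apply Continuous.div
    · apply Continuous.zpow₀ (by continuity)
      intro x; exact Or.inl (plus_ne x)
    · apply Continuous.zpow₀ (by continuity)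
      intro x; exact Or.inl (minus_ne x)
    · intro x; exact zpow_ne_zero _ (minus_ne x)
  refine integrable_inv_one_add_four_sq.mono' hc.aestronglyMeasurable ?_
  filter_upwards with x
  rw [norm_mtg]

/-- Antiderivative of `mtg k` for `k ≠ 0`. -/
noncomputable def mtF (k : ℤ) (x : ℝ) : ℂ :=
  (4 * Complex.I * k)⁻¹ * ((1 + 2 * Complex.I * x) ^ k * (1 - 2 * Complex.I * x) ^ (-k))

lemma hasDerivAt_plus (x : ℝ) :
    HasDerivAt (fun x : ℝ => (1 + 2 * Complex.I * x : ℂ)) (2 * Complex.I) x := by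
  simpa using (((Complex.ofRealCLM.hasDerivAt (x := x)).const_mul
    (2 * Complex.I)).const_add 1)

lemma hasDerivAt_minus (x : ℝ) :
    HasDerivAt (fun x : ℝ => (1 - 2 * Complex.I * x : ℂ)) (-(2 * Complex.I)) x := by
  simpa [sub_eq_add_neg, neg_mul, mul_comm] using
    (((Complex.ofRealCLM.hasDerivAt (x := x)).const_mul
    (-(2 * Complex.I))).const_add 1)

lemma hasDerivAt_mtF (k : ℤ) (hk0 : k ≠ 0) (x : ℝ) : HasDerivAt (mtF k) (mtg k x) x := by
  have h1 : HasDerivAt (fun x : ℝ => (1 + 2 * Complex.I * x : ℂ) ^ k)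
      ((k : ℂ) * (1 + 2 * Complex.I * x) ^ (k - 1) * (2 * Complex.I)) x :=
    by have := (hasDerivAt_zpow k _ (Or.inl (plus_ne x))).comp x (hasDerivAt_plus x); exact this
  have h2 : HasDerivAt (fun x : ℝ => (1 - 2 * Complex.I * x : ℂ) ^ (-k))
      (((-k : ℤ) : ℂ) * (1 - 2 * Complex.I * x) ^ (-k - 1) * (-(2 * Complex.I))) x :=
    by have := (hasDerivAt_zpow (-k) _ (Or.inl (minus_ne x))).comp x (hasDerivAt_minus x); exact this
  have h := ((h1.mul h2).const_mul ((4 * Complex.I * k)⁻¹ : ℂ))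
  convert h using 1
  · rfl
  · rfl
  have e1 : (1 + 2 * Complex.I * x : ℂ) ^ k
      = (1 + 2 * Complex.I * x) ^ (k - 1) * (1 + 2 * Complex.I * x) := by
    rw [← zpow_add_one₀ (plus_ne x)]; ring_nf
  have e2 : (1 - 2 * Complex.I * x : ℂ) ^ (-k)
      = (1 - 2 * Complex.I * x) ^ (-k - 1) * (1 - 2 * Complex.I * x) := by
    rw [← zpow_add_one₀ (minus_ne x)]; ring_nf
  have e3 : (1 - 2 * Complex.I * x : ℂ) ^ (-k - 1) = ((1 - 2 * Complex.I * x) ^ (k + 1))⁻¹ := by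
    rw [← zpow_neg]; ring_nf
  have hk : (k : ℂ) ≠ 0 := Int.cast_ne_zero.mpr hk0
  rw [mtg, e1, e2, e3]
  have h4 : (4 * Complex.I * k)⁻¹ * (4 * Complex.I * k) = 1 :=
    inv_mul_cancel₀ (by simp [hk, Complex.I_ne_zero])
  rw [div_eq_mul_inv]; push_cast
  linear_combination (-(1 + 2 * Complex.I * x) ^ (k - 1) * ((1 - 2 * Complex.I * x) ^ (k + 1))⁻¹) * h4

lemma tendsto_inv_minus {l : Filter ℝ} (hl : Tendsto (fun x : ℝ => |x|) l atTop) :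
    Tendsto (fun x : ℝ => ((1 - 2 * Complex.I * x : ℂ))⁻¹) l (𝓝 0) := by
  apply squeeze_zero_norm' (a := fun x : ℝ => |x|⁻¹)
  · filter_upwards [hl.eventually_ge_atTop 1] with x hx
    rw [norm_inv]
    apply inv_anti₀ (by linarith)
    rw [norm_minus]
    calc |x| = Real.sqrt (x ^ 2) := by rw [Real.sqrt_sq_eq_abs]
    _ ≤ Real.sqrt (1 + 4 * x ^ 2) := Real.sqrt_le_sqrt (by nlinarith)
  · exact tendsto_inv_atTop_zero.comp hl

lemma tendsto_mtF (k : ℤ) {l : Filter ℝ} (hl : Tendsto (fun x : ℝ => |x|) l atTop) :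
    Tendsto (mtF k) l (𝓝 ((4 * Complex.I * k)⁻¹ * (-1) ^ k)) := by
  have hr : Tendsto (fun x : ℝ => (-1 : ℂ) + 2 * (1 - 2 * Complex.I * x)⁻¹) l (𝓝 (-1)) := by
    have := (tendsto_inv_minus hl).const_mul (2 : ℂ)
    simpa using this.const_add (-1 : ℂ)
  have hz : Tendsto (fun x : ℝ => ((-1 : ℂ) + 2 * (1 - 2 * Complex.I * x)⁻¹) ^ k)
      l (𝓝 ((-1 : ℂ) ^ k)) :=
    (continuousAt_zpow₀ (-1 : ℂ) k (Or.inl (by norm_num))).tendsto.comp hr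
  have heq : ∀ x : ℝ, mtF k x = (4 * Complex.I * k)⁻¹ *
      ((-1 : ℂ) + 2 * (1 - 2 * Complex.I * x)⁻¹) ^ k := by
    intro x
    rw [mtF]
    congr 1
    have : (-1 : ℂ) + 2 * (1 - 2 * Complex.I * x)⁻¹
        = (1 + 2 * Complex.I * x) / (1 - 2 * Complex.I * x) := by
      rw [div_eq_mul_inv]
      linear_combination inv_mul_cancel₀ (minus_ne x)
    rw [this, div_zpow, zpow_neg, div_eq_mul_inv]
  rw [show mtF k = fun x : ℝ => (4 * Complex.I * k)⁻¹ *
      ((-1 : ℂ) + 2 * (1 - 2 * Complex.I * x)⁻¹) ^ k from funext heq]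
  exact hz.const_mul _

lemma real_int : ∫ x : ℝ, (1 + 4 * x ^ 2)⁻¹ = π / 2 := by
  have h := MeasureTheory.Measure.integral_comp_mul_left (fun y : ℝ => (1 + y ^ 2)⁻¹) 2
  simp only [integral_univ_inv_one_add_sq] at h
  have h2 : (fun x : ℝ => (1 + (2 * x) ^ 2)⁻¹) = fun x : ℝ => (1 + 4 * x ^ 2)⁻¹ := by
    funext x; ring_nf
  rw [h2] at h
  rw [h]
  rw [smul_eq_mul, abs_of_pos (by norm_num : (0:ℝ) < 2⁻¹)]
  ring

lemma key_integral (k : ℤ) :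
    (∫ x : ℝ, mtg k x) = if k = 0 then ((π : ℂ) / 2) else 0 := by
  rcases eq_or_ne k 0 with rfl | hk
  · simp only [if_pos]
    have hg : ∀ x : ℝ, mtg 0 x = (((1 + 4 * x ^ 2 : ℝ) : ℂ))⁻¹ := by
      intro x
      rw [mtg]
      norm_num
      rw [div_eq_mul_inv, ← mul_inv]
      congr 1
      linear_combination (-4 * (x:ℂ) ^ 2) * Complex.I_sq
    rw [show (fun x : ℝ => mtg 0 x) = fun x : ℝ => (((1 + 4 * x ^ 2 : ℝ) : ℂ))⁻¹
      from funext hg]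
    simp_rw [← Complex.ofReal_inv]
    have h := Complex.ofRealCLM.integral_comp_comm integrable_inv_one_add_four_sq
    simp only [Complex.ofRealCLM_apply] at h
    rw [h, real_int]
    push_cast
    ring
  · simp only [if_neg hk]
    have h := MeasureTheory.integral_of_hasDerivAt_of_tendsto
      (hasDerivAt_mtF k hk) (integrable_mtg k)
      (tendsto_mtF k tendsto_abs_atBot_atTop) (tendsto_mtF k tendsto_abs_atTop_atTop)
    rw [h, sub_self]

/-- Orthonormality of the Malmquist–Takenaka functions in `L²(ℝ, ℂ)`. -/
theorem mtf_orthonormal (n m : ℤ) :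
    ∫ x : ℝ, mtf n x * (starRingEnd ℂ) (mtf m x) = if n = m then 1 else 0 := by
  have key_pt : ∀ x : ℝ, mtf n x * (starRingEnd ℂ) (mtf m x)
      = (((2 : ℝ) / π : ℝ) : ℂ) * Complex.I ^ (n - m) * mtg (n - m) x := by
    intro x
    have hp := plus_ne x
    have hq := minus_ne x
    have hconj : (starRingEnd ℂ) (mtf m x)
        = (-Complex.I) ^ m * (Real.sqrt (2 / π) : ℂ) *
          (1 - 2 * Complex.I * x) ^ m / (1 + 2 * Complex.I * x) ^ (m + 1) := by
      rw [mtf, map_div₀, map_mul, map_mul, map_zpow₀, map_zpow₀, map_zpow₀]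
      rw [Complex.conj_I, Complex.conj_ofReal]
      congr 2
      · simp [map_add, map_mul, map_ofNat, Complex.conj_I, Complex.conj_ofReal]
        rw [← sub_eq_add_neg]
      · simp [map_sub, map_mul, map_ofNat, Complex.conj_I, Complex.conj_ofReal]
    have e1 : Complex.I ^ n * (-Complex.I) ^ m = Complex.I ^ (n - m) := by
      rw [← Complex.inv_I, inv_zpow, ← zpow_neg, ← zpow_add₀ Complex.I_ne_zero,
        sub_eq_add_neg]
    have e2 : (1 + 2 * Complex.I * x : ℂ) ^ n / (1 + 2 * Complex.I * x) ^ (m + 1)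
        = (1 + 2 * Complex.I * x) ^ (n - m - 1) := by
      rw [← zpow_sub₀ hp]; congr 1; ring
    have e3 : (1 - 2 * Complex.I * x : ℂ) ^ m / (1 - 2 * Complex.I * x) ^ (n + 1)
        = ((1 - 2 * Complex.I * x) ^ (n - m + 1))⁻¹ := by
      rw [← zpow_sub₀ hq, ← zpow_neg]; congr 1; ring
    have e4 : ((Real.sqrt (2 / π) : ℝ) : ℂ) * ((Real.sqrt (2 / π) : ℝ) : ℂ)
        = (((2 : ℝ) / π : ℝ) : ℂ) := by
      rw [← Complex.ofReal_mul, Real.mul_self_sqrt (by positivity)]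
    calc mtf n x * (starRingEnd ℂ) (mtf m x)
        = (Complex.I ^ n * (-Complex.I) ^ m)
          * ((Real.sqrt (2 / π) : ℂ) * (Real.sqrt (2 / π) : ℂ))
          * (((1 + 2 * Complex.I * x) ^ n / (1 + 2 * Complex.I * x) ^ (m + 1))
            * ((1 - 2 * Complex.I * x) ^ m / (1 - 2 * Complex.I * x) ^ (n + 1))) := by
          rw [mtf, hconj]; ring
      _ = (((2 : ℝ) / π : ℝ) : ℂ) * Complex.I ^ (n - m) * mtg (n - m) x := by
          rw [e1, e2, e3, e4, mtg, div_eq_mul_inv]; ring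
  simp_rw [key_pt]
  rw [integral_const_mul, key_integral]
  rcases eq_or_ne n m with rfl | hnm
  · simp only [sub_self, if_pos rfl, zpow_zero, mul_one]
    have hπ : (π : ℂ) ≠ 0 := Complex.ofReal_ne_zero.mpr Real.pi_ne_zero
    push_cast
    field_simp
  · rw [if_neg (sub_ne_zero.mpr hnm), if_neg hnm, mul_zero]
end

section
/- For every integer n and every real x, the derivative of the Malmquist–Takenaka function satisfies the three-term differential recurrence φ_n'(x) = −n · φ_{n−1}(x) + i(2n+1) · φ_n(x) + (n+1) · φ_{n+1}(x). -/
open Complex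

/-- The three-term differential recurrence for the Malmquist–Takenaka functions:
`φ_n'(x) = -n φ_{n-1}(x) + i(2n+1) φ_n(x) + (n+1) φ_{n+1}(x)`. -/
theorem mtf_deriv (n : ℤ) (x : ℝ) :
    deriv (mtf n) x =
      -(n : ℂ) * mtf (n - 1) x + Complex.I * (2 * n + 1) * mtf n x
        + ((n : ℂ) + 1) * mtf (n + 1) x := by
  have ha : ∀ y : ℝ, (1 + 2 * Complex.I * y : ℂ) ≠ 0 := by
    intro y h
    have := congrArg Complex.re h
    simp [Complex.add_re, Complex.mul_re] at this
  have hb : ∀ y : ℝ, (1 - 2 * Complex.I * y : ℂ) ≠ 0 := by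
    intro y h
    have := congrArg Complex.re h
    simp [Complex.sub_re, Complex.mul_re] at this
  set c : ℂ := Complex.I ^ n * (Real.sqrt (2 / Real.pi) : ℂ) with hc
  have hA : HasDerivAt (fun y : ℝ => (1 + 2 * Complex.I * y : ℂ)) (2 * Complex.I) x := by
    have := (Complex.ofRealCLM.hasDerivAt (x := x)).const_mul (2 * Complex.I)
    simpa using this.const_add 1
  have hB : HasDerivAt (fun y : ℝ => (1 - 2 * Complex.I * y : ℂ)) (-(2 * Complex.I)) x := by
    have := (Complex.ofRealCLM.hasDerivAt (x := x)).const_mul (2 * Complex.I)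
    simpa [sub_eq_add_neg] using (this.neg).const_add 1
  have hAz : HasDerivAt (fun y : ℝ => (1 + 2 * Complex.I * y : ℂ) ^ n)
      ((n : ℂ) * (1 + 2 * Complex.I * x) ^ (n - 1) * (2 * Complex.I)) x :=
    HasDerivAt.comp (𝕜' := ℂ) x (hasDerivAt_zpow n _ (Or.inl (ha x))) hA
  have hBz : HasDerivAt (fun y : ℝ => (1 - 2 * Complex.I * y : ℂ) ^ (-(n + 1)))
      ((-(n + 1) : ℂ) * (1 - 2 * Complex.I * x) ^ (-(n + 1) - 1) * (-(2 * Complex.I))) x := by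
    have := (hasDerivAt_zpow (-(n + 1)) _ (Or.inl (hb x))).comp x hB
    exact this.congr_deriv (by push_cast; ring)
  have key : HasDerivAt (mtf n)
      (c * (((n : ℂ) * (1 + 2 * Complex.I * x) ^ (n - 1) * (2 * Complex.I)) *
        (1 - 2 * Complex.I * x) ^ (-(n + 1)) +
        (1 + 2 * Complex.I * x) ^ n *
        ((-(n + 1) : ℂ) * (1 - 2 * Complex.I * x) ^ (-(n + 1) - 1) * (-(2 * Complex.I))))) x := by
    have hfun : mtf n = fun y : ℝ => c *
        ((1 + 2 * Complex.I * y) ^ n * (1 - 2 * Complex.I * y) ^ (-(n + 1))) := by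
      funext y
      simp only [mtf, hc]
      rw [zpow_neg, div_eq_mul_inv]
      ring
    rw [hfun]
    exact (hAz.mul hBz).const_mul c
  rw [key.deriv]
  simp only [mtf, hc]
  set a : ℂ := 1 + 2 * Complex.I * x with hadef
  set b : ℂ := 1 - 2 * Complex.I * x with hbdef
  have ha0 : a ≠ 0 := ha x
  have hb0 : b ≠ 0 := hb x
  have hB2 : b ^ (n + 2) ≠ 0 := zpow_ne_zero _ hb0
  have ea1 : a ^ n = a ^ (n - 1) * a := by
    rw [← zpow_add_one₀ ha0]; ring_nf
  have ea2 : a ^ (n + 1) = a ^ (n - 1) * a * a := by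
    rw [← zpow_add_one₀ ha0, ← zpow_add_one₀ ha0]; ring_nf
  have eb1 : b ^ (-(n + 1)) = b * (b ^ (n + 2))⁻¹ := by
    rw [show -(n + 1) = 1 + -(n + 2) by ring, zpow_add₀ hb0, zpow_one, zpow_neg]
  have eb2 : b ^ (-(n + 1) - 1) = (b ^ (n + 2))⁻¹ := by
    rw [show -(n + 1) - 1 = -(n + 2) by ring, zpow_neg]
  have eb3 : b ^ (n - 1 + 1) = b ^ (n + 2) * (b * b)⁻¹ := by
    rw [show n - 1 + 1 = (n + 2) + -(1 + 1) by ring, zpow_add₀ hb0, zpow_neg]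
    congr 2
    rw [zpow_add₀ hb0, zpow_one]
  have eb4 : b ^ (n + 1) = b ^ (n + 2) * b⁻¹ := by
    rw [show n + 1 = (n + 2) + -1 by ring, zpow_add₀ hb0, zpow_neg, zpow_one]
  have eb5 : b ^ (n + 1 + 1) = b ^ (n + 2) := by rw [show n + 1 + 1 = n + 2 from by ring]
  have eI : Complex.I ^ (n - 1) = Complex.I ^ n * -Complex.I := by
    rw [show n - 1 = n + -1 by ring, zpow_add₀ Complex.I_ne_zero, zpow_neg, zpow_one,
      Complex.inv_I]
  have eI2 : Complex.I ^ (n + 1) = Complex.I ^ n * Complex.I :=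
    zpow_add_one₀ Complex.I_ne_zero n
  rw [ea1, ea2, eb1, eb2, eb3, eb4, eb5, eI, eI2]
  have hab : b = 2 - a := by rw [hadef, hbdef]; ring
  rw [hab] at *
  field_simp
  ring
end

section
/- For every integer n and every real x, the Malmquist–Takenaka function satisfies the identity x · φ_n'(x) = −(n/2) · i · φ_{n−1}(x) − (1/2) · φ_n(x) − ((n+1)/2) · i · φ_{n+1}(x). -/
open Complex

/-- `mtf` rewritten with a negative power instead of division. -/
lemma mtf_eq (n : ℤ) : mtf n = fun x : ℝ =>
    Complex.I ^ n * (Real.sqrt (2 / Real.pi) : ℂ) *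
      ((1 + 2 * Complex.I * x) ^ n * (1 - 2 * Complex.I * x) ^ (-(n + 1))) := by
  funext x
  unfold mtf
  rw [div_eq_mul_inv, ← zpow_neg, mul_assoc]

set_option maxHeartbeats 1000000 in
/-- The identity `x φ_n'(x) = -(n/2) i φ_{n-1}(x) - (1/2) φ_n(x) - ((n+1)/2) i φ_{n+1}(x)`. -/
theorem mtf_x_deriv (n : ℤ) (x : ℝ) :
    (x : ℂ) * deriv (mtf n) x =
      -((n : ℂ) / 2) * Complex.I * mtf (n - 1) x - (1 / 2) * mtf n x
        - (((n : ℂ) + 1) / 2) * Complex.I * mtf (n + 1) x := by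
  have ha : HasDerivAt (fun x : ℝ => (1 + 2 * Complex.I * x : ℂ)) (2 * Complex.I) x := by
    simpa using ((Complex.ofRealCLM.hasDerivAt (x := x)).const_mul (2 * Complex.I)).const_add 1
  have hb : HasDerivAt (fun x : ℝ => (1 - 2 * Complex.I * x : ℂ)) (-(2 * Complex.I)) x := by
    simpa using ((Complex.ofRealCLM.hasDerivAt (x := x)).const_mul (2 * Complex.I)).const_sub 1
  have ha0 : (1 + 2 * Complex.I * x : ℂ) ≠ 0 := by
    intro h; have := congrArg Complex.re h; simp at this
  have hb0 : (1 - 2 * Complex.I * x : ℂ) ≠ 0 := by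
    intro h; have := congrArg Complex.re h; simp at this
  have hprod : HasDerivAt
      (fun x : ℝ => (1 + 2 * Complex.I * x) ^ n * (1 - 2 * Complex.I * x) ^ (-(n + 1)))
      ((n : ℂ) * (1 + 2 * Complex.I * x) ^ (n - 1) * (2 * Complex.I) *
          (1 - 2 * Complex.I * x) ^ (-(n + 1)) +
        (1 + 2 * Complex.I * x) ^ n *
          ((-(n + 1) : ℤ) * (1 - 2 * Complex.I * x) ^ (-(n + 1) - 1) * (-(2 * Complex.I)))) x := by
    have h1 := (hasDerivAt_zpow n _ (Or.inl ha0)).comp x ha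
    have h2 := (hasDerivAt_zpow (-(n + 1)) _ (Or.inl hb0)).comp x hb
    exact h1.mul h2
  have hder : deriv (mtf n) x =
      Complex.I ^ n * (Real.sqrt (2 / Real.pi) : ℂ) *
        ((n : ℂ) * (1 + 2 * Complex.I * x) ^ (n - 1) * (2 * Complex.I) *
            (1 - 2 * Complex.I * x) ^ (-(n + 1)) +
          (1 + 2 * Complex.I * x) ^ n *
            ((-(n + 1) : ℤ) * (1 - 2 * Complex.I * x) ^ (-(n + 1) - 1) * (-(2 * Complex.I)))) := by
    rw [mtf_eq]
    exact (hprod.const_mul _).deriv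
  rw [hder, mtf_eq (n - 1), mtf_eq n, mtf_eq (n + 1)]
  simp only
  rw [show (-(n - 1 + 1) : ℤ) = -(n + 1) + 1 by ring,
    show (-(n + 1 + 1) : ℤ) = -(n + 1) - 1 by ring]
  simp only [zpow_add_one₀ ha0, zpow_add_one₀ hb0, zpow_add_one₀ Complex.I_ne_zero,
    zpow_sub_one₀ ha0, zpow_sub_one₀ hb0, zpow_sub_one₀ Complex.I_ne_zero,
    Int.cast_neg, Int.cast_add, Int.cast_one]
  have hA0 : (1 + 2 * Complex.I * x : ℂ) ^ n ≠ 0 := zpow_ne_zero _ ha0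
  have hB0 : (1 - 2 * Complex.I * x : ℂ) ^ (-(n + 1)) ≠ 0 := zpow_ne_zero _ hb0
  have hI0 : (Complex.I : ℂ) ^ n ≠ 0 := zpow_ne_zero _ Complex.I_ne_zero
  generalize (1 + 2 * Complex.I * x : ℂ) ^ n = A at hA0 ⊢
  generalize (1 - 2 * Complex.I * x : ℂ) ^ (-(n + 1)) = B at hB0 ⊢
  generalize (Complex.I : ℂ) ^ n = J at hI0 ⊢
  generalize ((Real.sqrt (2 / Real.pi) : ℝ) : ℂ) = s
  have hI2 : (Complex.I : ℂ) ^ 2 = -1 := Complex.I_sq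
  field_simp [ha0, hb0]
  ring_nf
  simp only [show (Complex.I:ℂ)^2 = -1 from hI2,
    show (Complex.I:ℂ)^3 = -Complex.I by rw [pow_succ, hI2]; ring,
    show (Complex.I:ℂ)^4 = 1 by rw [show (4:ℕ)=2+2 from rfl, pow_add, hI2]; ring,
    show (Complex.I:ℂ)^5 = Complex.I by rw [show (5:ℕ)=2+3 from rfl, pow_add, hI2, pow_succ, hI2]; ring,
    show (Complex.I:ℂ)^6 = -1 by rw [show (6:ℕ)=2+2+2 from rfl, pow_add, pow_add, hI2]; ring]
  have ha' : (1 + (x:ℂ) * Complex.I * 2) ≠ 0 := by convert ha0 using 1; ring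
  have hb' : (1 - (x:ℂ) * Complex.I * 2) ≠ 0 := by convert hb0 using 1; ring
  field_simp
  ring
end

section
/- Let f ∈ L²(ℝ, ℂ) and let g : ℂ → ℂ be continuous on the unit circle and satisfy g(z) = (2/(1+z)) · f( (z−1)/(2i(z+1)) ) for every z with |z| = 1 and z ≠ −1. Then for every integer k, the Malmquist–Takenaka coefficient a_k = ∫_ℝ f(x) · conj(φ_k(x)) dx equals (−i)^k · √(π/2) times the k-th Laurent coefficient of g on the unit circle; that is, a_k = (−i)^k · √(π/2) · (1/(2πi)) · ∮_{|z|=1} g(z) · z^{−k−1} dz. -/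
open Complex MeasureTheory

lemma mt_u_ne (x : ℝ) : (1 + 2*Complex.I*(x:ℂ)) ≠ 0 := by
  intro h; have := congrArg Complex.re h; simp at this

lemma mt_v_ne (x : ℝ) : (1 - 2*Complex.I*(x:ℂ)) ≠ 0 := by
  intro h; have := congrArg Complex.re h; simp at this

lemma mt_uv (x : ℝ) : (1 + 2*Complex.I*(x:ℂ)) * (1 - 2*Complex.I*(x:ℂ)) = 1 + 4*(x:ℂ)^2 := by
  linear_combination (-4*(x:ℂ)^2) * Complex.I_sq

lemma mt_key (a b : ℝ) (ha : a ≠ 0) (hp : b^2 + a^2 = 1) :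
    (((2*a^2-1 : ℝ):ℂ) + ((2*b*a : ℝ):ℂ)*Complex.I) * (1 - 2*Complex.I*((b/a/2 : ℝ):ℂ))
      = 1 + 2*Complex.I*((b/a/2:ℝ):ℂ) := by
  have ha' : (a:ℂ) ≠ 0 := Complex.ofReal_ne_zero.mpr ha
  have hp' : (b:ℂ)^2 + (a:ℂ)^2 = 1 := by exact_mod_cast congrArg (fun t : ℝ => (t:ℂ)) hp
  push_cast
  field_simp
  linear_combination (2*(a:ℂ)*(b:ℂ)^2 + 2*(a:ℂ)*(b:ℂ)*Complex.I -
      2*(a:ℂ)^2*(b:ℂ)*Complex.I) * Complex.I_sq +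
    (2*(a:ℂ) + 2*(a:ℂ)*(b:ℂ)*Complex.I) * hp' +
    ((-2*(a:ℂ)*(b:ℂ)+2*(a:ℂ)^2*(b:ℂ))*Complex.I - 6*(a:ℂ)*(b:ℂ)^2) * Complex.I_sq +
    (-2*(a:ℂ)*(b:ℂ)*Complex.I + 2*(a:ℂ)) * hp' + 2*(a:ℂ)*(b:ℂ)^2 * Complex.I_sq - 2*(a:ℂ) * hp'

lemma mt_exp (θ : ℝ) (hc : Real.cos (θ/2) ≠ 0) :
    Complex.exp (θ*Complex.I) * (1 - 2*Complex.I*((Real.tan (θ/2)/2 : ℝ):ℂ))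
      = 1 + 2*Complex.I*((Real.tan (θ/2)/2 : ℝ):ℂ) := by
  have h1 : Real.cos θ = 2 * Real.cos (θ/2)^2 - 1 := by
    have := Real.cos_two_mul (θ/2); rwa [show 2*(θ/2) = θ by ring] at this
  have h2 : Real.sin θ = 2 * Real.sin (θ/2) * Real.cos (θ/2) := by
    have := Real.sin_two_mul (θ/2); rwa [show 2*(θ/2) = θ by ring] at this
  have h3 : Real.tan (θ/2)/2 = Real.sin (θ/2) / Real.cos (θ/2) / 2 := by
    rw [Real.tan_eq_sin_div_cos]
  rw [Complex.exp_mul_I, ← Complex.ofReal_cos, ← Complex.ofReal_sin, h1, h2, h3]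
  exact mt_key (Real.cos (θ/2)) (Real.sin (θ/2)) hc (Real.sin_sq_add_cos_sq _)

lemma mt_sqrt : Real.sqrt (2/Real.pi) * (2*Real.pi) = Real.sqrt (Real.pi/2) * 4 := by
  have hπ := Real.pi_pos
  have h2 : (0:ℝ) < Real.sqrt (Real.pi/2) := Real.sqrt_pos.2 (by positivity)
  have hsq : Real.sqrt (Real.pi/2) * Real.sqrt (Real.pi/2) = Real.pi/2 :=
    Real.mul_self_sqrt (by positivity)
  have h : Real.sqrt (Real.pi/2) * Real.sqrt (2/Real.pi) = 1 := by
    rw [← Real.sqrt_mul (by positivity), show Real.pi/2 * (2/Real.pi) = 1 by field_simp]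
    exact Real.sqrt_one
  apply mul_left_cancel₀ (ne_of_gt h2)
  calc Real.sqrt (Real.pi/2) * (Real.sqrt (2/Real.pi) * (2*Real.pi))
      = (Real.sqrt (Real.pi/2) * Real.sqrt (2/Real.pi)) * (2*Real.pi) := by ring
    _ = 2*Real.pi := by rw [h, one_mul]
    _ = (Real.pi/2) * 4 := by ring
    _ = (Real.sqrt (Real.pi/2) * Real.sqrt (Real.pi/2)) * 4 := by rw [hsq]
    _ = Real.sqrt (Real.pi/2) * (Real.sqrt (Real.pi/2) * 4) := by ring

lemma mt_conj (k : ℤ) (x : ℝ) :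
    (starRingEnd ℂ) (mtf k x) =
      (-Complex.I)^k * ((Real.sqrt (2/Real.pi)):ℂ) *
        (1 - 2*Complex.I*(x:ℂ))^k / (1 + 2*Complex.I*(x:ℂ))^(k+1) := by
  have hcu : (starRingEnd ℂ) (1 + 2*Complex.I*(x:ℂ)) = 1 - 2*Complex.I*(x:ℂ) := by
    simp only [map_add, map_mul, map_one, Complex.conj_I, Complex.conj_ofReal, map_ofNat]
    ring
  have hcv : (starRingEnd ℂ) (1 - 2*Complex.I*(x:ℂ)) = 1 + 2*Complex.I*(x:ℂ) := by
    simp only [map_sub, map_mul, map_one, Complex.conj_I, Complex.conj_ofReal, map_ofNat]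
    ring
  rw [mtf]
  simp only [map_div₀, map_mul, map_zpow₀, hcu, hcv, Complex.conj_I, Complex.conj_ofReal]

lemma mt_field (u v U V W a b p c J : ℂ) (hu : u ≠ 0) (hv : v ≠ 0) (hU : U ≠ 0)
    (hV : V ≠ 0) (hp : p ≠ 0) (hJ : J ≠ 0) (hs : a * (2*p) = b * 4) :
    (u*v/4) * (c * (W * a * V / (U*u)))
      = (W * b * (1/(2*p*J))) * ((u/v*J) * ((v*c) * ((U*u)⁻¹/(V*v)⁻¹))) := by
  field_simp
  linear_combination (c*W) * hs

lemma mt_zpow (k : ℤ) (x : ℝ) (c : ℂ) :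
    (((1 + 2*Complex.I*(x:ℂ)) * (1 - 2*Complex.I*(x:ℂ)))/4) *
        (c * ((-Complex.I)^k * ((Real.sqrt (2/Real.pi)):ℂ) *
          (1 - 2*Complex.I*(x:ℂ))^k / (1 + 2*Complex.I*(x:ℂ))^(k+1)))
      = ((-Complex.I)^k * ((Real.sqrt (Real.pi/2)):ℂ) * (1/(2*(Real.pi:ℂ)*Complex.I))) *
        (((1 + 2*Complex.I*(x:ℂ))/(1 - 2*Complex.I*(x:ℂ))*Complex.I) *
          (((1 - 2*Complex.I*(x:ℂ)) * c) *
            ((1 + 2*Complex.I*(x:ℂ))^(-k-1)/(1 - 2*Complex.I*(x:ℂ))^(-k-1)))) := by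
  have hu0 := mt_u_ne x; have hv0 := mt_v_ne x
  have e1 : (1 + 2*Complex.I*(x:ℂ))^(k+1)
      = (1 + 2*Complex.I*(x:ℂ))^k * (1 + 2*Complex.I*(x:ℂ)) := zpow_add_one₀ hu0 k
  have e2 : (1 + 2*Complex.I*(x:ℂ))^(-k-1)
      = ((1 + 2*Complex.I*(x:ℂ))^k * (1 + 2*Complex.I*(x:ℂ)))⁻¹ := by
    rw [show -k-1 = -(k+1) by ring, zpow_neg, zpow_add_one₀ hu0]
  have e3 : (1 - 2*Complex.I*(x:ℂ))^(-k-1)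
      = ((1 - 2*Complex.I*(x:ℂ))^k * (1 - 2*Complex.I*(x:ℂ)))⁻¹ := by
    rw [show -k-1 = -(k+1) by ring, zpow_neg, zpow_add_one₀ hv0]
  rw [e1, e2, e3]
  exact mt_field _ _ _ _ _ _ _ _ _ _ hu0 hv0 (zpow_ne_zero _ hu0) (zpow_ne_zero _ hv0)
    (Complex.ofReal_ne_zero.mpr Real.pi_ne_zero) Complex.I_ne_zero
    (by exact_mod_cast congrArg (fun t:ℝ => (t:ℂ)) mt_sqrt)

lemma mt_pointwise (f : ℝ → ℂ) (g : ℂ → ℂ)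
    (hg : ∀ z : ℂ, ‖z‖ = 1 → z ≠ -1 →
      g z = 2 / (1 + z) * f (((z - 1) / (2 * Complex.I * (z + 1))).re)) (k : ℤ)
    (θ : ℝ) (hθ : θ ∈ Set.Ioo (-Real.pi) Real.pi) :
    |1/(4 * Real.cos (θ/2)^2)| • (f (Real.tan (θ/2)/2) * (starRingEnd ℂ) (mtf k (Real.tan (θ/2)/2)))
      = ((-Complex.I)^k * ((Real.sqrt (Real.pi/2)):ℂ) * (1/(2*(Real.pi:ℂ)*Complex.I))) *
        (deriv (circleMap 0 1) θ • (g (circleMap 0 1 θ) * (circleMap 0 1 θ) ^ (-k-1))) := by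
  obtain ⟨hθ1, hθ2⟩ := hθ
  have hpi := Real.pi_pos
  have hc : 0 < Real.cos (θ/2) :=
    Real.cos_pos_of_mem_Ioo ⟨by linarith, by linarith⟩
  set x : ℝ := Real.tan (θ/2)/2 with hxdef
  have hu0 := mt_u_ne x; have hv0 := mt_v_ne x
  have hz : circleMap 0 1 θ = (1 + 2*Complex.I*(x:ℂ)) / (1 - 2*Complex.I*(x:ℂ)) := by
    rw [circleMap_zero, Complex.ofReal_one, one_mul, eq_div_iff hv0]
    exact mt_exp θ hc.ne'
  have hsum : (1 + 2*Complex.I*(x:ℂ)) + (1 - 2*Complex.I*(x:ℂ)) = 2 := by ring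
  have habs : ‖circleMap 0 1 θ‖ = 1 := by
    rw [norm_circleMap_zero]; norm_num
  have hne : circleMap 0 1 θ ≠ -1 := by
    rw [hz]
    intro h
    rw [div_eq_iff hv0] at h
    have h2 : (2:ℂ) = 0 := by linear_combination h - hsum
    norm_num at h2
  have hzadd : circleMap 0 1 θ + 1 = 2 / (1 - 2*Complex.I*(x:ℂ)) := by
    rw [hz]; field_simp; linear_combination hsum
  have hzsub : circleMap 0 1 θ - 1 = (4*Complex.I*(x:ℂ)) / (1 - 2*Complex.I*(x:ℂ)) := by
    rw [hz]; field_simp; ring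
  have harg : ((circleMap 0 1 θ - 1) / (2*Complex.I*(circleMap 0 1 θ + 1))) = (x:ℂ) := by
    rw [hzsub, hzadd, div_eq_iff (mul_ne_zero (mul_ne_zero two_ne_zero Complex.I_ne_zero) (div_ne_zero two_ne_zero hv0))]
    field_simp
    ring
  have hzadd' : (1:ℂ) + circleMap 0 1 θ = 2 / (1 - 2*Complex.I*(x:ℂ)) := by
    rw [add_comm]; exact hzadd
  have hgz : g (circleMap 0 1 θ) = (1 - 2*Complex.I*(x:ℂ)) * f x := by
    rw [hg _ habs hne, harg, Complex.ofReal_re, hzadd']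
    congr 1
    field_simp
  have hre : |1/(4 * Real.cos (θ/2)^2)| = 1/(4 * Real.cos (θ/2)^2) := abs_of_pos (by positivity)
  have hr : (1/(4 * Real.cos (θ/2)^2) : ℝ) = (1 + 4*x^2)/4 := by
    rw [hxdef, Real.tan_eq_sin_div_cos]
    have hp := Real.sin_sq_add_cos_sq (θ/2)
    field_simp
    linear_combination (-4) * hp
  have hcast : ((1/(4 * Real.cos (θ/2)^2) : ℝ) : ℂ)
      = ((1 + 2*Complex.I*(x:ℂ)) * (1 - 2*Complex.I*(x:ℂ)))/4 := by
    rw [mt_uv x, hr]; push_cast; ring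
  rw [Complex.real_smul, hre, hcast, mt_conj, smul_eq_mul, deriv_circleMap, hgz, hz, div_zpow]
  exact mt_zpow k x (f x)

/-- The Malmquist–Takenaka coefficients of `f` are (up to the factor `(-i)^k √(π/2)`)
the Laurent coefficients on the unit circle of the transplanted function `g`. -/
theorem mtf_coeff_laurent (f : ℝ → ℂ) (hf : MemLp f 2 (volume : Measure ℝ))
    (g : ℂ → ℂ) (hg_cont : ContinuousOn g (Metric.sphere (0 : ℂ) 1))
    (hg : ∀ z : ℂ, ‖z‖ = 1 → z ≠ -1 →
      g z = 2 / (1 + z) * f (((z - 1) / (2 * Complex.I * (z + 1))).re)) (k : ℤ) :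
    ∫ x : ℝ, f x * (starRingEnd ℂ) (mtf k x) =
      (-Complex.I) ^ k * (Real.sqrt (Real.pi / 2) : ℂ) *
        ((1 / (2 * Real.pi * Complex.I)) * ∮ z in C(0, 1), g z * z ^ (-k - 1)) := by
  have hpi := Real.pi_pos
  set S : Set ℝ := Set.Ioo (-Real.pi) Real.pi with hS
  set φ : ℝ → ℝ := fun θ => Real.tan (θ/2) / 2 with hφ
  set d : ℝ → ℝ := fun θ => 1/(4 * Real.cos (θ/2)^2) with hd
  set C : ℂ := (-Complex.I)^k * ((Real.sqrt (Real.pi/2)):ℂ) * (1/(2*(Real.pi:ℂ)*Complex.I))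
    with hC
  set G : ℝ → ℂ := fun θ =>
    deriv (circleMap 0 1) θ • (g (circleMap 0 1 θ) * (circleMap 0 1 θ) ^ (-k-1)) with hG
  have himg : φ '' S = Set.univ := by
    apply Set.eq_univ_of_forall
    intro y
    refine ⟨2 * Real.arctan (2*y), ⟨?_, ?_⟩, ?_⟩
    · linarith [Real.neg_pi_div_two_lt_arctan (2*y)]
    · linarith [Real.arctan_lt_pi_div_two (2*y)]
    · show Real.tan (2 * Real.arctan (2*y) / 2) / 2 = y
      rw [show 2 * Real.arctan (2*y) / 2 = Real.arctan (2*y) by ring, Real.tan_arctan]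
      ring
  have hinj : Set.InjOn φ S := by
    intro a ha b hb h
    have h' : Real.tan (a/2) = Real.tan (b/2) := by
      have : Real.tan (a/2) / 2 = Real.tan (b/2) / 2 := h
      linarith
    have := Real.injOn_tan ⟨by linarith [ha.1], by linarith [ha.2]⟩
      ⟨by linarith [hb.1], by linarith [hb.2]⟩ h'
    linarith
  have hderiv : ∀ θ ∈ S, HasDerivWithinAt φ (d θ) S θ := by
    intro θ hθ
    have hc : Real.cos (θ/2) ≠ 0 :=
      (Real.cos_pos_of_mem_Ioo ⟨by linarith [hθ.1], by linarith [hθ.2]⟩).ne'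
    have h1 : HasDerivAt (fun t : ℝ => t/2) (1/2) θ := (hasDerivAt_id θ).div_const 2
    have h2 : HasDerivAt (fun t : ℝ => Real.tan (t/2)) (1/Real.cos (θ/2)^2 * (1/2)) θ :=
      by have := (Real.hasDerivAt_tan hc).comp θ h1; exact this
    have h3 := h2.div_const 2
    have hval : 1/Real.cos (θ/2)^2 * (1/2) / 2 = d θ := by
      rw [hd]; field_simp; ring
    exact (hval ▸ h3).hasDerivWithinAt
  have step1 : ∫ x : ℝ, f x * (starRingEnd ℂ) (mtf k x)
      = ∫ θ in S, |d θ| • (f (φ θ) * (starRingEnd ℂ) (mtf k (φ θ))) := by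
    rw [← MeasureTheory.setIntegral_univ, ← himg]
    exact MeasureTheory.integral_image_eq_integral_abs_deriv_smul measurableSet_Ioo hderiv hinj _
  have hper : Function.Periodic G (2*Real.pi) := by
    intro t
    simp only [hG, deriv_circleMap, periodic_circleMap 0 1 t]
  have step2 : (∮ z in C(0, 1), g z * z ^ (-k-1)) = ∫ θ in S, G θ := by
    rw [circleIntegral]
    have hshift := hper.intervalIntegral_add_eq 0 (-Real.pi)
    rw [zero_add, show -Real.pi + 2*Real.pi = Real.pi by ring] at hshift
    rw [hshift, intervalIntegral.integral_of_le (by linarith),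
      MeasureTheory.integral_Ioc_eq_integral_Ioo]
  calc ∫ x : ℝ, f x * (starRingEnd ℂ) (mtf k x)
      = ∫ θ in S, |d θ| • (f (φ θ) * (starRingEnd ℂ) (mtf k (φ θ))) := step1
    _ = ∫ θ in S, C * G θ := by
        refine MeasureTheory.setIntegral_congr_fun measurableSet_Ioo (fun θ hθ => ?_)
        exact mt_pointwise f g hg k θ hθ
    _ = C * ∫ θ in S, G θ := MeasureTheory.integral_const_mul _ _
    _ = C * ∮ z in C(0, 1), g z * z ^ (-k-1) := by rw [step2]
    _ = (-Complex.I) ^ k * (Real.sqrt (Real.pi / 2) : ℂ) *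
        ((1 / (2 * Real.pi * Complex.I)) * ∮ z in C(0, 1), g z * z ^ (-k - 1)) := by
        rw [hC]; ring
end

section
/- For every natural number n and every real x, the Malmquist–Takenaka function of index n is the (absolutely convergent) Fourier-type integral of the n-th Laguerre function: (1/√(2π)) · ∫_0^∞ e^{−ξ/2} · L_n(ξ) · e^{i x ξ} dξ = i^n · φ_n(x). Equivalently, the Fourier transform of φ_n equals (−i)^n Ψ_n. -/
open Complex MeasureTheory

/-- The Laguerre polynomial `L_n(x) = ∑_{k=0}^{n} (n choose k) (-x)^k / k!`. -/
noncomputable def laguerre (n : ℕ) (x : ℝ) : ℝ :=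
  ∑ k ∈ Finset.range (n + 1), (n.choose k : ℝ) * (-x) ^ k / (Nat.factorial k : ℝ)


open Set Filter Topology

lemma mt_tendsto (c : ℂ) (hc : 0 < c.re) (k : ℕ) :
    Tendsto (fun t : ℝ => (t : ℂ) ^ k * Complex.exp (-c * t)) atTop (nhds 0) := by
  rw [tendsto_zero_iff_norm_tendsto_zero]
  have h : ∀ᶠ t : ℝ in atTop, t ^ k * Real.exp (-(c.re * t)) =
      ‖(t : ℂ) ^ k * Complex.exp (-c * t)‖ := by
    filter_upwards [eventually_ge_atTop (0:ℝ)] with t ht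
    rw [norm_mul, norm_pow, Complex.norm_exp,
      Complex.norm_real, Real.norm_of_nonneg ht]
    congr 2
    simp [mul_comm]
  apply Tendsto.congr' h
  have h2 : Tendsto (fun t : ℝ => (c.re * t) ^ k * Real.exp (-(c.re * t)) / c.re ^ k)
      atTop (nhds 0) := by
    have := (Real.tendsto_pow_mul_exp_neg_atTop_nhds_zero k).comp
      (tendsto_id.const_mul_atTop hc)
    simpa using this.div_const (c.re ^ k)
  apply h2.congr
  intro t
  field_simp [mul_pow]
  ring

lemma mt_integrable (c : ℂ) (hc : 0 < c.re) (k : ℕ) :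
    IntegrableOn (fun t : ℝ => (t : ℂ) ^ k * Complex.exp (-c * t)) (Ioi 0) := by
  have hg : IntegrableOn (fun t : ℝ => t ^ (k : ℝ) * Real.exp (-c.re * t ^ (1:ℝ))) (Ioi 0) :=
    integrableOn_rpow_mul_exp_neg_mul_rpow (lt_of_lt_of_le neg_one_lt_zero (Nat.cast_nonneg k)) one_pos hc
  apply Integrable.mono' hg
  · exact ((continuous_ofReal.pow k).mul
      ((continuous_const.mul continuous_ofReal).cexp)).aestronglyMeasurable.restrict
  · filter_upwards [ae_restrict_mem measurableSet_Ioi] with t ht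
    rw [norm_mul, norm_pow, Complex.norm_exp,
      Complex.norm_real, Real.norm_of_nonneg (le_of_lt ht)]
    rw [Real.rpow_natCast, Real.rpow_one]
    apply le_of_eq
    congr 1
    simp

lemma mt_integral (c : ℂ) (hc : 0 < c.re) (k : ℕ) :
    ∫ t in Ioi (0:ℝ), (t : ℂ) ^ k * Complex.exp (-c * t) = k.factorial / c ^ (k + 1) := by
  have hc0 : c ≠ 0 := fun h => by simp [h] at hc
  induction k with
  | zero =>
      have hderiv : ∀ t ∈ Ici (0:ℝ),
          HasDerivAt (fun t : ℝ => -Complex.exp (-c * t) / c) (Complex.exp (-c * t)) t := by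
        intro t _
        have h1 : HasDerivAt (fun z : ℂ => -Complex.exp (-c * z) / c)
            (Complex.exp (-c * t)) (t : ℂ) := by
          have := (((hasDerivAt_id (t : ℂ)).const_mul (-c)).cexp.neg).div_const c
          refine this.congr_deriv ?_
          simp only [id, Pi.neg_apply, Nat.add_sub_cancel]
          field_simp
        exact h1.comp_ofReal
      have hI := integral_Ioi_of_hasDerivAt_of_tendsto' hderiv
        (by simpa using mt_integrable c hc 0)
        (by simpa [neg_div] using ((mt_tendsto c hc 0).div_const c).neg)
      rw [show (∫ t in Ioi (0:ℝ), (t:ℂ)^0 * Complex.exp (-c * t))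
        = ∫ t in Ioi (0:ℝ), Complex.exp (-c * t) from
          setIntegral_congr_fun measurableSet_Ioi (fun t _ => by simp), hI]
      simp [Nat.factorial, neg_div]
  | succ k ih =>
      have hderiv : ∀ t ∈ Ici (0:ℝ),
          HasDerivAt (fun t : ℝ => -(t : ℂ) ^ (k+1) * Complex.exp (-c * t) / c)
            ((t : ℂ) ^ (k+1) * Complex.exp (-c * t)
              - ((k+1 : ℕ) / c) * ((t : ℂ) ^ k * Complex.exp (-c * t))) t := by
        intro t _
        have h1 : HasDerivAt (fun z : ℂ => -z ^ (k+1) * Complex.exp (-c * z) / c)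
            ((t : ℂ) ^ (k+1) * Complex.exp (-c * t)
              - ((k+1 : ℕ) / c) * ((t : ℂ) ^ k * Complex.exp (-c * t))) (t : ℂ) := by
          have hp := hasDerivAt_pow (k+1) (t : ℂ)
          have he := ((hasDerivAt_id (t : ℂ)).const_mul (-c)).cexp
          have := ((hp.neg.mul he).div_const c)
          refine this.congr_deriv ?_
          simp only [id, Pi.neg_apply, Nat.add_sub_cancel]
          field_simp
          ring
        exact h1.comp_ofReal
      have hint : IntegrableOn (fun t : ℝ =>
          (t : ℂ) ^ (k+1) * Complex.exp (-c * t)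
            - ((k+1 : ℕ) / c) * ((t : ℂ) ^ k * Complex.exp (-c * t))) (Ioi 0) :=
        (mt_integrable c hc (k+1)).sub ((mt_integrable c hc k).const_mul _)
      have htend : Tendsto (fun t : ℝ => -(t : ℂ) ^ (k+1) * Complex.exp (-c * t) / c)
          atTop (nhds 0) := by
        have := ((mt_tendsto c hc (k+1)).neg).div_const c
        simpa using this
      have key := integral_Ioi_of_hasDerivAt_of_tendsto' hderiv hint htend
      rw [integral_sub (mt_integrable c hc (k+1)) ((mt_integrable c hc k).const_mul _),
        integral_const_mul, ih] at key
      simp only [Complex.ofReal_zero, ne_eq] at key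
      have heq : (∫ t in Ioi (0:ℝ), (t:ℂ)^(k+1) * Complex.exp (-c * t))
          = ((k+1:ℕ) / c) * ((k.factorial : ℂ) / c ^ (k+1)) := by
        have h0 : (0:ℂ) - -(0:ℂ) ^ (k+1) * Complex.exp (-c * 0) / c = 0 := by simp
        rw [h0] at key
        exact sub_eq_zero.mp key
      rw [heq, Nat.factorial_succ]
      push_cast
      rw [div_mul_div_comm, ← pow_succ']

/-- The Malmquist–Takenaka function is the Fourier-type integral of the Laguerre
function: `(1/√(2π)) ∫_0^∞ e^{-ξ/2} L_n(ξ) e^{ixξ} dξ = i^n φ_n(x)`. -/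
theorem mtf_fourier_laguerre (n : ℕ) (x : ℝ) :
    (1 / (Real.sqrt (2 * Real.pi) : ℂ)) *
        ∫ ξ in Set.Ioi (0 : ℝ),
          ((Real.exp (-ξ / 2) * laguerre n ξ : ℝ) : ℂ) * Complex.exp (Complex.I * x * ξ) =
      Complex.I ^ n * mtf n x := by
  set c : ℂ := 1/2 - Complex.I * x with hcdef
  have hcre : 0 < c.re := by
    simp [hcdef, Complex.sub_re, Complex.mul_re]
  have hc0 : c ≠ 0 := fun h => by simp [h] at hcre
  have hne : (1 - 2 * Complex.I * (x:ℂ)) ≠ 0 := by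
    intro h
    have := congrArg Complex.re h
    simp [Complex.sub_re, Complex.mul_re] at this
  have hSpos : (0:ℝ) < Real.sqrt (2 * Real.pi) := Real.sqrt_pos.mpr (by positivity)
  have hSne : ((Real.sqrt (2 * Real.pi) : ℝ) : ℂ) ≠ 0 := by
    exact_mod_cast ne_of_gt hSpos
  have hsS : ((Real.sqrt (2 / Real.pi) : ℝ) : ℂ) * ((Real.sqrt (2 * Real.pi) : ℝ) : ℂ) = 2 := by
    rw [← Complex.ofReal_mul, ← Real.sqrt_mul (by positivity)]
    rw [show (2 / Real.pi) * (2 * Real.pi) = 2^2 by field_simp [Real.pi_ne_zero]]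
    rw [Real.sqrt_sq (by norm_num)]
    norm_num
  -- rewrite the integrand
  have hrep : ∀ ξ ∈ Set.Ioi (0:ℝ),
      ((Real.exp (-ξ / 2) * laguerre n ξ : ℝ) : ℂ) * Complex.exp (Complex.I * x * ξ) =
      ∑ k ∈ Finset.range (n+1),
        ((n.choose k : ℂ) * (-1)^k / (k.factorial : ℂ)) *
          ((ξ:ℂ)^k * Complex.exp (-c * ξ)) := by
    intro ξ _
    have hexp : ((Real.exp (-ξ/2) : ℝ) : ℂ) * Complex.exp (Complex.I * x * ξ)
        = Complex.exp (-c * ξ) := by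
      rw [Complex.ofReal_exp, ← Complex.exp_add]
      congr 1
      rw [hcdef]
      push_cast
      ring
    calc ((Real.exp (-ξ / 2) * laguerre n ξ : ℝ) : ℂ) * Complex.exp (Complex.I * x * ξ)
        = ((laguerre n ξ : ℝ) : ℂ) *
            (((Real.exp (-ξ/2) : ℝ) : ℂ) * Complex.exp (Complex.I * x * ξ)) := by
          push_cast; ring
      _ = ((laguerre n ξ : ℝ) : ℂ) * Complex.exp (-c * ξ) := by rw [hexp]
      _ = _ := by
          rw [laguerre]
          push_cast
          rw [Finset.sum_mul]
          apply Finset.sum_congr rfl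
          intro k _
          ring
  rw [setIntegral_congr_fun measurableSet_Ioi hrep]
  rw [integral_finset_sum _ (fun k _ => (mt_integrable c hcre k).const_mul _)]
  have hterm : ∀ k ∈ Finset.range (n+1),
      (∫ ξ in Set.Ioi (0:ℝ), ((n.choose k : ℂ) * (-1)^k / (k.factorial : ℂ)) *
        ((ξ:ℂ)^k * Complex.exp (-c * ξ)))
      = ((-1:ℂ))^k * c^(n-k) * (n.choose k : ℂ) / c^(n+1) := by
    intro k hk
    rw [integral_const_mul, mt_integral c hcre k]
    have hkn : k ≤ n := Nat.lt_succ_iff.mp (Finset.mem_range.mp hk)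
    rw [show n + 1 = (k+1) + (n-k) by omega, pow_add]
    have hkf : ((k.factorial : ℕ) : ℂ) ≠ 0 := by
      exact_mod_cast Nat.factorial_ne_zero k
    field_simp
    ring
  rw [Finset.sum_congr rfl hterm, ← Finset.sum_div]
  rw [show ∑ k ∈ Finset.range (n+1), ((-1:ℂ))^k * c^(n-k) * (n.choose k : ℂ)
      = (c - 1)^n from by
        rw [show c - 1 = -1 + c from by ring]; exact (add_pow (-1:ℂ) c n).symm]
  -- final algebra
  have key2 : (c - 1)^n / c^(n+1)
      = (-1:ℂ)^n * 2 * (1 + 2 * Complex.I * x)^n / (1 - 2 * Complex.I * (x:ℂ))^(n+1) := by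
    have hc1 : c - 1 = -(1 + 2 * Complex.I * x) / 2 := by rw [hcdef]; ring
    have hc2 : c = (1 - 2 * Complex.I * (x:ℂ)) / 2 := by rw [hcdef]; ring
    rw [hc1, hc2, div_pow, div_pow, neg_pow]
    rw [div_div_div_eq, pow_succ]
    field_simp [hne]
  rw [key2, mtf, show ((n:ℤ) + 1) = ((n + 1 : ℕ) : ℤ) by push_cast; ring,
    zpow_natCast, zpow_natCast, zpow_natCast]
  rw [show Complex.I ^ n * (Complex.I ^ n * ((Real.sqrt (2 / Real.pi) : ℝ) : ℂ) *
      (1 + 2 * Complex.I * x) ^ n / (1 - 2 * Complex.I * (x:ℂ)) ^ (n+1))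
      = (Complex.I ^ n * Complex.I ^ n) * (((Real.sqrt (2 / Real.pi) : ℝ) : ℂ) *
      (1 + 2 * Complex.I * x) ^ n / (1 - 2 * Complex.I * (x:ℂ)) ^ (n+1)) by ring]
  rw [show Complex.I ^ n * Complex.I ^ n = (-1:ℂ)^n by
    rw [← mul_pow, Complex.I_mul_I]]
  have hss : ((Real.sqrt (2 / Real.pi) : ℝ) : ℂ) = 2 / ((Real.sqrt (2 * Real.pi) : ℝ) : ℂ) := by
    rw [eq_div_iff hSne]; exact hsS
  rw [hss]
  ring
end

section
/- Let α ∈ (0, 2), n ∈ ℕ and x ∈ ℝ. Then ∫_0^∞ ξ^α · e^{−ξ/2} · L_n(ξ) · e^{i x ξ} dξ = Γ(α+1) · (1/2 − ix)^{−α−1} · Σ_{ℓ=0}^{n} ( (−n)_ℓ · (α+1)_ℓ / (ℓ!)² ) · (1/2 − ix)^{−ℓ}, where the complex power (1/2 − ix)^{−α−1} is taken with the principal branch (note Re(1/2 − ix) > 0). This gives the closed form of the fractional Laplacian of the Malmquist–Takenaka function φ_n for n ≥ 0, since the finite sum equals the terminating Gauss hypergeometric series ₂F₁(−n, α+1; 1;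 1/(1/2 − ix)). -/
open Complex MeasureTheory

/-- The Pochhammer symbol `(z)_ℓ = z (z+1) ⋯ (z+ℓ-1)` for `z : ℂ`. -/
noncomputable def pochC (z : ℂ) (l : ℕ) : ℂ :=
  ∏ j ∈ Finset.range l, (z + j)

open Set Filter


lemma aux_integrableOn_rpow {c b : ℝ} (hc : -1 < c) (hb : 0 < b) :
    IntegrableOn (fun t : ℝ => t ^ c * Real.exp (-b * t)) (Ioi 0) := by
  simpa [Real.rpow_one] using integrableOn_rpow_mul_exp_neg_mul_rpow hc zero_lt_one hb

lemma aux_cont (a z : ℂ) :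
    ContinuousOn (fun t : ℝ => (t : ℂ) ^ (a - 1) * Complex.exp (-(z * t))) (Ioi 0) := by
  intro t ht
  exact ((continuousAt_ofReal_cpow_const t (a - 1) (Or.inr (ne_of_gt ht))).mul
    (Complex.continuous_exp.continuousAt.comp
      ((continuous_const.mul Complex.continuous_ofReal).neg.continuousAt))).continuousWithinAt

lemma aux_norm {a z : ℂ} {t : ℝ} (ht : 0 < t) :
    ‖(t : ℂ) ^ (a - 1) * Complex.exp (-(z * t))‖ = t ^ (a.re - 1) * Real.exp (-z.re * t) := by
  rw [norm_mul,
    Complex.norm_cpow_eq_rpow_re_of_pos ht, Complex.norm_exp]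
  simp [Complex.sub_re, neg_mul]

lemma integrableOn_cpow_cexp {a z : ℂ} (ha : 0 < a.re) (hz : 0 < z.re) :
    IntegrableOn (fun t : ℝ => (t : ℂ) ^ (a - 1) * Complex.exp (-(z * t))) (Ioi 0) := by
  refine Integrable.mono' (aux_integrableOn_rpow (c := a.re - 1) (by linarith) hz)
    ((aux_cont a z).aestronglyMeasurable measurableSet_Ioi) ?_
  filter_upwards [ae_restrict_mem measurableSet_Ioi] with t ht
  rw [aux_norm ht]

lemma hasDeriv_int {a : ℂ} (ha : 0 < a.re) {z₀ : ℂ} (hz₀ : 0 < z₀.re) :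
    DifferentiableAt ℂ (fun z : ℂ => ∫ t : ℝ in Ioi 0,
      (t : ℂ) ^ (a - 1) * Complex.exp (-(z * t))) z₀ := by
  set ε := z₀.re / 2 with hε
  have hε0 : 0 < ε := half_pos hz₀
  have H := hasDerivAt_integral_of_dominated_loc_of_deriv_le
    (F := fun (z : ℂ) (t : ℝ) => (t : ℂ) ^ (a - 1) * Complex.exp (-(z * t)))
    (F' := fun (z : ℂ) (t : ℝ) => (t : ℂ) ^ (a - 1) * (Complex.exp (-(z * t)) * (-t)))
    (bound := fun t : ℝ => t ^ a.re * Real.exp (-ε * t))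
    (μ := volume.restrict (Ioi 0)) (x₀ := z₀) (Metric.ball_mem_nhds z₀ hε0)
    (Eventually.of_forall fun z => (aux_cont a z).aestronglyMeasurable measurableSet_Ioi)
    (integrableOn_cpow_cexp ha hz₀)
    ?_ ?_ ?_ ?_
  · exact H.2.differentiableAt
  · -- measurability of F' z₀
    apply ContinuousOn.aestronglyMeasurable _ measurableSet_Ioi
    exact ((aux_cont a z₀).mul (Complex.continuous_ofReal.neg.continuousOn)).congr
      (fun t ht => by simp only [Pi.mul_apply, Pi.neg_apply]; ring)
  · -- bound
    filter_upwards [ae_restrict_mem measurableSet_Ioi] with t ht z hzball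
    have ht' : (0:ℝ) < t := ht
    have hzre : ε < z.re := by
      have h1 : |(z - z₀).re| ≤ ‖z - z₀‖ := Complex.abs_re_le_norm _
      have h2 : ‖z - z₀‖ < ε := by
        rwa [Metric.mem_ball, Complex.dist_eq] at hzball
      have := abs_lt.mp (lt_of_le_of_lt h1 h2)
      simp only [Complex.sub_re] at this
      linarith [this.1]
    rw [norm_mul, norm_mul,
      Complex.norm_cpow_eq_rpow_re_of_pos ht', Complex.norm_exp]
    have : ‖(-(t:ℂ))‖ = t := by
      simp [abs_of_pos ht']
    rw [this]
    have hre : (-(z * t)).re = -z.re * t := by simp [neg_mul]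
    rw [hre]
    rw [show (a-1).re = a.re - 1 by simp]
    have h1 : t ^ (a.re - 1) * (Real.exp (-z.re * t) * t) = t ^ a.re * Real.exp (-z.re * t) := by
      rw [show a.re = (a.re - 1) + 1 by ring, Real.rpow_add ht', Real.rpow_one]; ring
    rw [h1]
    have : Real.exp (-z.re * t) ≤ Real.exp (-ε * t) := by
      apply Real.exp_le_exp.mpr; nlinarith
    have h0 : (0:ℝ) ≤ t ^ a.re := (Real.rpow_pos_of_pos ht' _).le
    exact mul_le_mul_of_nonneg_left this h0
  · exact aux_integrableOn_rpow (by linarith) hε0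
  · -- differentiability pointwise
    filter_upwards with t z hz
    have h1 : HasDerivAt (fun z : ℂ => -(z * t)) (-(t:ℂ)) z := by
      exact (((hasDerivAt_id z).mul_const (t:ℂ)).neg).congr_deriv (by simp)
    exact (h1.cexp).const_mul _

lemma integral_cpow_mul_cexp {a : ℂ} (ha : 0 < a.re) {s : ℂ} (hs : 0 < s.re) :
    ∫ t : ℝ in Ioi 0, (t : ℂ) ^ (a - 1) * Complex.exp (-(s * t))
      = Complex.Gamma a * s ^ (-a) := by
  set U : Set ℂ := {z | 0 < z.re} with hU
  have hUo : IsOpen U := isOpen_lt continuous_const Complex.continuous_re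
  set F : ℂ → ℂ := fun z => ∫ t : ℝ in Ioi 0, (t : ℂ) ^ (a - 1) * Complex.exp (-(z * t))
    with hF_def
  set G : ℂ → ℂ := fun z => Complex.Gamma a * z ^ (-a) with hG_def
  have hF : DifferentiableOn ℂ F U := fun z hz =>
    (hasDeriv_int ha hz).differentiableWithinAt
  have hG : DifferentiableOn ℂ G U := by
    intro z hz
    refine DifferentiableAt.differentiableWithinAt ?_
    exact (differentiableAt_id.cpow (differentiableAt_const _) (Or.inl hz)).const_mul _
  have key_real : ∀ r : ℝ, 0 < r → F ((r : ℝ) : ℂ) = G ((r : ℝ) : ℂ) := by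
    intro r hr
    have h1 := Complex.integral_cpow_mul_exp_neg_mul_Ioi ha hr
    have harg : ((r : ℂ)).arg ≠ Real.pi := by
      rw [Complex.arg_ofReal_of_nonneg hr.le]
      exact fun h => Real.pi_ne_zero h.symm
    rw [hF_def]
    simp only
    rw [h1, hG_def]
    simp only
    rw [Complex.cpow_neg, one_div, Complex.inv_cpow _ _ harg, mul_comm]
  have hfreq : ∃ᶠ z in nhdsWithin (1 : ℂ) {(1 : ℂ)}ᶜ, F z = G z := by
    have htend : Tendsto (fun m : ℕ => ((1 + 1 / (m + 1) : ℝ) : ℂ)) atTop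
        (nhdsWithin (1 : ℂ) {(1 : ℂ)}ᶜ) := by
      apply tendsto_nhdsWithin_of_tendsto_nhds_of_eventually_within
      · have h2 : Tendsto (fun m : ℕ => (1 + 1 / (m + 1) : ℝ)) atTop (nhds 1) := by
          have := tendsto_one_div_add_atTop_nhds_zero_nat (𝕜 := ℝ)
          simpa using tendsto_const_nhds.add this
        have h3 := (Complex.continuous_ofReal.tendsto (1 : ℝ)).comp h2
        rw [show ((1:ℝ):ℂ) = 1 from by norm_num] at h3
        exact h3
      · filter_upwards with m
        simp only [mem_compl_iff, mem_singleton_iff]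
        intro h
        have h' : (1 + 1 / (m + 1 : ℝ)) = 1 := by exact_mod_cast h
        have hm : (0:ℝ) < 1 / (m + 1) := by positivity
        linarith
    exact htend.frequently (Frequently.of_forall fun m => key_real _ (by positivity))
  have heq : EqOn F G U :=
    AnalyticOnNhd.eqOn_of_preconnected_of_frequently_eq (hF.analyticOnNhd hUo)
      (hG.analyticOnNhd hUo) ((convex_halfSpace_re_gt 0).isPreconnected)
      (by simp [hU] : (1:ℂ) ∈ U) hfreq
  exact heq (hs : s ∈ U)

lemma pochC_succ (z : ℂ) (k : ℕ) : pochC z (k + 1) = pochC z k * (z + k) := by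
  rw [pochC, Finset.prod_range_succ, pochC]

lemma pochC_neg_nat (n : ℕ) : ∀ k : ℕ, pochC (-(n : ℂ)) k = (-1) ^ k * (n.descFactorial k : ℂ)
  | 0 => by simp [pochC]
  | (k + 1) => by
    rw [pochC_succ, pochC_neg_nat n k, Nat.descFactorial_succ]
    rcases le_or_gt k n with h | h
    · push_cast [h]; ring
    · rw [Nat.descFactorial_of_lt h]; push_cast; ring

lemma gammaC_shift {α : ℝ} (hα : 0 < α) :
    ∀ k : ℕ, Complex.Gamma ((α : ℂ) + k + 1)
      = pochC ((α : ℂ) + 1) k * (Real.Gamma (α + 1) : ℂ)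
  | 0 => by
    simp only [Nat.cast_zero, add_zero]
    rw [show ((α : ℂ) + 1) = ((α + 1 : ℝ) : ℂ) by push_cast; ring, Complex.Gamma_ofReal]
    simp [pochC]
  | (k + 1) => by
    have hne : ((α : ℂ) + k + 1) ≠ 0 := by
      have hre : (0:ℝ) < ((α : ℂ) + k + 1).re := by simp; positivity
      intro h
      rw [h] at hre
      simp at hre
    rw [show ((α : ℂ) + (k + 1 : ℕ) + 1) = ((α : ℂ) + k + 1) + 1 by push_cast; ring,
      Complex.Gamma_add_one _ hne, gammaC_shift hα k, pochC_succ]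
    ring

/-- Closed form of `∫_0^∞ ξ^α e^{-ξ/2} L_n(ξ) e^{ixξ} dξ` as a terminating Gauss
hypergeometric series, giving the fractional Laplacian of `φ_n` for `n ≥ 0`.
The power `(1/2 - ix)^{-α-1}` is the principal complex power. -/
theorem laguerre_fractional_integral (α : ℝ) (hα : α ∈ Set.Ioo (0 : ℝ) 2) (n : ℕ) (x : ℝ) :
    ∫ ξ in Set.Ioi (0 : ℝ),
        ((ξ ^ α * Real.exp (-ξ / 2) * laguerre n ξ : ℝ) : ℂ) * Complex.exp (Complex.I * x * ξ) =
      (Real.Gamma (α + 1) : ℂ) * (1 / 2 - Complex.I * x) ^ (-(α : ℂ) - 1) *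
        ∑ l ∈ Finset.range (n + 1),
          pochC (-(n : ℂ)) l * pochC ((α : ℂ) + 1) l / ((Nat.factorial l : ℂ)) ^ 2 *
            (1 / 2 - Complex.I * x) ^ (-(l : ℤ)) := by
  obtain ⟨hα0, hα2⟩ := hα
  set s : ℂ := 1 / 2 - Complex.I * x with hs_def
  have hs_re : 0 < s.re := by
    simp [hs_def]
  have hs_ne : s ≠ 0 := by
    intro h; rw [h] at hs_re; simp at hs_re
  have hare : ∀ k : ℕ, 0 < ((α : ℂ) + k + 1).re := by
    intro k; simp; positivity
  -- step 1: pointwise expansion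
  have expand : ∀ t : ℝ, t ∈ Ioi (0:ℝ) →
      ((t ^ α * Real.exp (-t / 2) * laguerre n t : ℝ) : ℂ) * Complex.exp (Complex.I * x * t)
      = ∑ k ∈ Finset.range (n + 1),
          ((n.choose k : ℂ) * (-1) ^ k / (k.factorial : ℂ)) *
            ((t : ℂ) ^ ((α : ℂ) + k + 1 - 1) * Complex.exp (-(s * t))) := by
    intro t ht
    have ht' : (0:ℝ) < t := ht
    have htC : (t : ℂ) ≠ 0 := Complex.ofReal_ne_zero.mpr ht'.ne'
    rw [laguerre]
    push_cast [Complex.ofReal_cpow ht'.le]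
    simp only [Finset.mul_sum, Finset.sum_mul]
    refine Finset.sum_congr rfl fun k _ => ?_
    rw [show (α : ℂ) + k + 1 - 1 = (α : ℂ) + k by ring, Complex.cpow_add _ _ htC,
      Complex.cpow_natCast,
      show -(s * t) = -(t : ℂ) / 2 + Complex.I * x * t by rw [hs_def]; ring,
      Complex.exp_add, neg_pow]
    ring
  rw [setIntegral_congr_fun measurableSet_Ioi expand]
  rw [integral_finset_sum _ fun k _ =>
    ((integrableOn_cpow_cexp (hare k) hs_re).const_mul _)]
  simp_rw [MeasureTheory.integral_const_mul,
    fun k => integral_cpow_mul_cexp (hare k) hs_re]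
  rw [Finset.mul_sum]
  refine Finset.sum_congr rfl fun k _ => ?_
  have hk : (k.factorial : ℂ) ≠ 0 := Nat.cast_ne_zero.mpr k.factorial_ne_zero
  rw [pochC_neg_nat n k, Nat.descFactorial_eq_factorial_mul_choose, gammaC_shift hα0 k,
    show -((α:ℂ)+k+1) = (-(α:ℂ)-1) + ((-(k:ℤ) : ℤ) : ℂ) by push_cast; ring,
    Complex.cpow_add _ _ hs_ne, Complex.cpow_intCast]
  push_cast
  field_simp
end

section
/- For all natural numbers j and k, ∫_0^∞ ξ · e^{−ξ} · L_j(ξ) · L_k(ξ) dξ equals 2j+1 if k = j, equals −j if k = j−1, equals −(j+1) if k = j+1, and equals 0 if |j − k| ≥ 2. Consequently, in the case α = 1 the Galerkin matrix of the fractional Laplacian in the Malmquist–Takenaka basis is tridiagonal. -/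
open MeasureTheory

open Finset in
private lemma lag_alt_sum_choose (j m : ℕ) :
    ∑ a ∈ range (j + 1), (-1 : ℤ) ^ a * (j.choose a) * (a.choose m)
      = (-1) ^ j * (if j = m then 1 else 0) := by
  rcases le_or_gt m j with hm | hm
  · have hsub : Ico m (j + 1) ⊆ range (j + 1) := by
      rw [range_eq_Ico]; exact Ico_subset_Ico (Nat.zero_le m) le_rfl
    have h1 : ∑ a ∈ range (j + 1), (-1 : ℤ) ^ a * (j.choose a) * (a.choose m)
        = ∑ a ∈ Ico m (j + 1), (-1 : ℤ) ^ a * (j.choose a) * (a.choose m) := by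
      refine (Finset.sum_subset hsub fun a _ ha => ?_).symm
      have : a < m := by simp [mem_Ico, mem_range] at *; omega
      simp [Nat.choose_eq_zero_of_lt this]
    rw [h1, Finset.sum_Ico_eq_sum_range]
    have h2 : j + 1 - m = (j - m) + 1 := by omega
    rw [h2]
    have h3 : ∀ c ∈ range (j - m + 1),
        (-1 : ℤ) ^ (m + c) * (j.choose (m + c)) * ((m + c).choose m)
          = ((-1 : ℤ) ^ m * (j.choose m)) * ((-1 : ℤ) ^ c * ((j - m).choose c)) := by
      intro c hc
      rw [mem_range] at hc
      have hle : m + c ≤ j := by omega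
      have key : (j.choose (m + c)) * ((m + c).choose m)
          = j.choose m * ((j - m).choose c) := by
        have := Nat.choose_mul (n := j) (k := m + c) (s := m) (Nat.le_add_right m c)
        simpa using this
      have keyZ : ((j.choose (m + c)) * ((m + c).choose m) : ℤ)
          = (j.choose m : ℤ) * ((j - m).choose c) := by exact_mod_cast key
      rw [pow_add]
      linear_combination ((-1 : ℤ)) ^ m * (-1) ^ c * keyZ
    rw [Finset.sum_congr rfl h3, ← Finset.mul_sum, Int.alternating_sum_range_choose]
    rcases eq_or_lt_of_le hm with h | h
    · subst h
      simp
    · have h4 : j - m ≠ 0 := by omega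
      simp only [if_neg h4, if_neg (by omega : ¬ j = m)]
      ring
  · have : ∀ a ∈ range (j + 1), (-1 : ℤ) ^ a * (j.choose a) * (a.choose m) = 0 := by
      intro a ha
      rw [mem_range] at ha
      simp [Nat.choose_eq_zero_of_lt (by omega : a < m)]
    rw [Finset.sum_congr rfl this]
    simp only [Finset.sum_const_zero, if_neg (by omega : ¬ j = m)]
    ring

open Finset in
private lemma lag_choose_add_eq_sum (m b : ℕ) :
    (m + b).choose m = ∑ t ∈ range (b + 1), m.choose t * b.choose t := by
  rw [Nat.choose_symm_add, Nat.add_choose_eq, Finset.Nat.sum_antidiagonal_eq_sum_range_succ_mk]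
  refine Finset.sum_congr rfl fun t ht => ?_
  rw [mem_range] at ht
  rw [Nat.choose_symm (by omega : t ≤ b)]

open Finset in
private lemma lag_sum_choose_mul (m k : ℕ) :
    ∑ b ∈ range (k + 1), (-1 : ℤ) ^ b * (k.choose b) * ((m + b).choose m)
      = (-1) ^ k * (m.choose k) := by
  have h1 : ∀ b ∈ range (k + 1),
      (-1 : ℤ) ^ b * (k.choose b) * ((m + b).choose m)
        = ∑ t ∈ range (k + 1), (m.choose t : ℤ) * ((-1) ^ b * (k.choose b) * (b.choose t)) := by
    intro b hb
    rw [mem_range] at hb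
    have h2 : ((m + b).choose m : ℤ) = ∑ t ∈ range (k + 1), (m.choose t : ℤ) * (b.choose t) := by
      rw [lag_choose_add_eq_sum]
      push_cast
      refine Finset.sum_subset (fun t ht => by
        rw [mem_range] at ht ⊢; omega) fun t ht hnt => ?_
      rw [mem_range] at ht hnt
      rw [Nat.choose_eq_zero_of_lt (by omega : b < t)]
      push_cast; ring
    rw [h2, Finset.mul_sum]
    refine Finset.sum_congr rfl fun t _ => by ring
  rw [Finset.sum_congr rfl h1, Finset.sum_comm]
  have h3 : ∀ t ∈ range (k + 1),
      ∑ b ∈ range (k + 1), (m.choose t : ℤ) * ((-1) ^ b * (k.choose b) * (b.choose t))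
        = (m.choose t : ℤ) * ((-1) ^ k * (if k = t then 1 else 0)) := by
    intro t _
    rw [← Finset.mul_sum, lag_alt_sum_choose]
  rw [Finset.sum_congr rfl h3]
  rw [Finset.sum_eq_single k]
  · simp [mul_comm]
  · intro t _ hne; simp [Ne.symm hne]
  · intro h; exact absurd (self_mem_range_succ k) h

private lemma lag_succ_mul_succ_choose (a k : ℕ) :
    ((a + 1) * ((a + 1).choose k) : ℤ)
      = (k + 1) * (a.choose (k + 1)) + (2 * k + 1) * (a.choose k) + k * (a.choose (k - 1)) := by
  rcases k with _ | k'
  · norm_num [Nat.choose_one_right]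
  · have e1 : ((a : ℤ) + 1) * (a.choose k') = (k' + 1) * ((a + 1).choose (k' + 1)) := by
      have := Nat.add_one_mul_choose_eq a k'
      have := congrArg (Nat.cast : ℕ → ℤ) this
      push_cast at this
      linarith [this]
    have e2 : ((a : ℤ) + 1) * (a.choose (k' + 1)) = (k' + 2) * ((a + 1).choose (k' + 2)) := by
      have := Nat.add_one_mul_choose_eq a (k' + 1)
      have := congrArg (Nat.cast : ℕ → ℤ) this
      push_cast at this
      linarith [this]
    have p1 : ((a + 1).choose (k' + 1) : ℤ) = a.choose k' + a.choose (k' + 1) := by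
      have := Nat.choose_succ_succ a k'
      exact_mod_cast congrArg (Nat.cast : ℕ → ℤ) this
    have p2 : ((a + 1).choose (k' + 2) : ℤ) = a.choose (k' + 1) + a.choose (k' + 2) := by
      have := Nat.choose_succ_succ a (k' + 1)
      exact_mod_cast congrArg (Nat.cast : ℕ → ℤ) this
    have hsub : (k' + 1 : ℕ) - 1 = k' := by omega
    rw [hsub]
    push_cast
    linear_combination ((a : ℤ) + 1) * p1 + e1 + e2 + ((k' : ℤ) + 1) * p1 + ((k' : ℤ) + 2) * p2

open Finset in
private lemma lag_main_sum (j k : ℕ) :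
    ∑ a ∈ range (j + 1), (-1 : ℤ) ^ a * (j.choose a) * ((a + 1) * ((a + 1).choose k))
      = (-1) ^ j * ((k + 1) * (if j = k + 1 then 1 else 0)
          + (2 * k + 1) * (if j = k then 1 else 0)
          + k * (if j + 1 = k then 1 else 0)) := by
  have h1 : ∀ a ∈ range (j + 1),
      (-1 : ℤ) ^ a * (j.choose a) * ((a + 1) * ((a + 1).choose k))
        = (k + 1) * ((-1) ^ a * (j.choose a) * (a.choose (k + 1)))
          + (2 * k + 1) * ((-1) ^ a * (j.choose a) * (a.choose k))
          + k * ((-1) ^ a * (j.choose a) * (a.choose (k - 1))) := by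
    intro a _
    rw [lag_succ_mul_succ_choose]
    ring
  rw [Finset.sum_congr rfl h1]
  rw [Finset.sum_add_distrib, Finset.sum_add_distrib, ← Finset.mul_sum, ← Finset.mul_sum,
    ← Finset.mul_sum, lag_alt_sum_choose, lag_alt_sum_choose, lag_alt_sum_choose]
  have hval : (k : ℤ) * ((-1) ^ j * (if j = k - 1 then 1 else 0))
      = (k : ℤ) * ((-1) ^ j * (if j + 1 = k then 1 else 0)) := by
    rcases Nat.eq_zero_or_pos k with hk | hk
    · subst hk; simp
    · congr 2
      split_ifs with h1 h2 <;> first | rfl | omega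
  rw [hval]
  ring

private lemma lag_integrable_pow_exp (n : ℕ) :
    IntegrableOn (fun x : ℝ => x ^ n * Real.exp (-x)) (Set.Ioi 0) := by
  have h := Real.GammaIntegral_convergent (s := (n : ℝ) + 1) (by positivity)
  refine h.congr_fun (fun x hx => ?_) measurableSet_Ioi
  beta_reduce
  rw [add_sub_cancel_right, Real.rpow_natCast, mul_comm]

private lemma lag_integral_pow_exp (n : ℕ) :
    ∫ x in Set.Ioi (0 : ℝ), x ^ n * Real.exp (-x) = (n.factorial : ℝ) := by
  have h := Real.integral_rpow_mul_exp_neg_mul_Ioi (a := (n : ℝ) + 1) (r := 1)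
    (by positivity) one_pos
  simp only [add_sub_cancel_right, one_mul, one_div, inv_one, Real.one_rpow] at h
  rw [Real.Gamma_nat_eq_factorial] at h
  rw [← h]
  refine setIntegral_congr_fun measurableSet_Ioi fun x hx => ?_
  rw [Real.rpow_natCast]

open Finset in
private lemma lag_expand (j k : ℕ) :
    ∫ ξ in Set.Ioi (0 : ℝ), ξ * Real.exp (-ξ) * laguerre j ξ * laguerre k ξ
      = ∑ a ∈ range (j + 1), ∑ b ∈ range (k + 1),
          (((-1 : ℝ) ^ a * j.choose a / a.factorial) * ((-1 : ℝ) ^ b * k.choose b / b.factorial))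
            * ((a + b + 1).factorial : ℝ) := by
  have hpt : ∀ x : ℝ, x * Real.exp (-x) * laguerre j x * laguerre k x
      = ∑ a ∈ range (j + 1), ∑ b ∈ range (k + 1),
          (((-1 : ℝ) ^ a * j.choose a / a.factorial) * ((-1 : ℝ) ^ b * k.choose b / b.factorial))
            * (x ^ (a + b + 1) * Real.exp (-x)) := by
    intro x
    simp only [laguerre, Finset.mul_sum, Finset.sum_mul]
    rw [Finset.sum_comm]
    refine Finset.sum_congr rfl fun b _ => Finset.sum_congr rfl fun a _ => ?_
    rw [neg_pow x a, neg_pow x b]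
    ring
  simp only [hpt]
  rw [integral_finset_sum]
  · refine Finset.sum_congr rfl fun a _ => ?_
    rw [integral_finset_sum]
    · refine Finset.sum_congr rfl fun b _ => ?_
      rw [MeasureTheory.integral_const_mul, lag_integral_pow_exp]
    · intro b _
      exact ((lag_integrable_pow_exp (a + b + 1)).const_mul _)
  · intro a _
    exact integrable_finset_sum _ fun b _ => ((lag_integrable_pow_exp (a + b + 1)).const_mul _)

open Finset in
private lemma lag_inner_real (m k : ℕ) :
    ∑ b ∈ range (k + 1), (-1 : ℝ) ^ b * (k.choose b) * ((m + b).factorial : ℝ) / (b.factorial : ℝ)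
      = (-1) ^ k * (m.factorial : ℝ) * (m.choose k) := by
  have key := lag_sum_choose_mul m k
  have keyR : ∑ b ∈ range (k + 1), (-1 : ℝ) ^ b * (k.choose b) * ((m + b).choose m : ℝ)
      = (-1) ^ k * (m.choose k : ℝ) := by exact_mod_cast key
  have h1 : ∀ b ∈ range (k + 1),
      (-1 : ℝ) ^ b * (k.choose b) * ((m + b).factorial : ℝ) / (b.factorial : ℝ)
        = (m.factorial : ℝ) * ((-1 : ℝ) ^ b * (k.choose b) * ((m + b).choose m : ℝ)) := by
    intro b _
    have hf : ((m + b).factorial : ℝ)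
        = ((m + b).choose m : ℝ) * (m.factorial : ℝ) * (b.factorial : ℝ) := by
      have hn : (m + b).choose m * m.factorial * b.factorial = (m + b).factorial := by
        rw [Nat.choose_symm_add]
        exact Nat.add_choose_mul_factorial_mul_factorial m b
      exact_mod_cast congrArg (Nat.cast : ℕ → ℝ) hn.symm
    have hb : (b.factorial : ℝ) ≠ 0 := by exact_mod_cast b.factorial_ne_zero
    rw [hf]
    field_simp
  rw [Finset.sum_congr rfl h1, ← Finset.mul_sum, keyR]
  ring

open Finset in
private lemma lag_integral_eq (j k : ℕ) :
    ∫ ξ in Set.Ioi (0 : ℝ), ξ * Real.exp (-ξ) * laguerre j ξ * laguerre k ξ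
      = (-1 : ℝ) ^ (j + k) * ((k + 1) * (if j = k + 1 then 1 else 0)
          + (2 * k + 1) * (if j = k then 1 else 0)
          + k * (if j + 1 = k then 1 else 0)) := by
  rw [lag_expand]
  have h1 : ∀ a ∈ range (j + 1),
      ∑ b ∈ range (k + 1),
        (((-1 : ℝ) ^ a * j.choose a / a.factorial) * ((-1 : ℝ) ^ b * k.choose b / b.factorial))
          * ((a + b + 1).factorial : ℝ)
        = ((-1 : ℝ) ^ a * j.choose a / a.factorial)
            * ∑ b ∈ range (k + 1),
                (-1 : ℝ) ^ b * (k.choose b) * (((a + 1) + b).factorial : ℝ) / (b.factorial : ℝ) := by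
    intro a _
    rw [Finset.mul_sum]
    refine Finset.sum_congr rfl fun b _ => ?_
    rw [show a + b + 1 = (a + 1) + b by omega]
    ring
  rw [Finset.sum_congr rfl h1]
  have h2 : ∀ a ∈ range (j + 1),
      ((-1 : ℝ) ^ a * j.choose a / a.factorial)
          * ∑ b ∈ range (k + 1),
              (-1 : ℝ) ^ b * (k.choose b) * (((a + 1) + b).factorial : ℝ) / (b.factorial : ℝ)
        = (-1 : ℝ) ^ k * ((-1 : ℝ) ^ a * (j.choose a) * (((a : ℝ) + 1) * ((a + 1).choose k))) := by
    intro a _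
    rw [lag_inner_real (a + 1) k]
    have hfa : ((a + 1).factorial : ℝ) = ((a : ℝ) + 1) * (a.factorial : ℝ) := by
      rw [Nat.factorial_succ]; push_cast; ring
    have ha : (a.factorial : ℝ) ≠ 0 := by exact_mod_cast a.factorial_ne_zero
    rw [hfa]
    field_simp
  rw [Finset.sum_congr rfl h2, ← Finset.mul_sum]
  have mainR : ∑ a ∈ range (j + 1),
      (-1 : ℝ) ^ a * (j.choose a) * (((a : ℝ) + 1) * ((a + 1).choose k))
        = (-1 : ℝ) ^ j * ((k + 1) * (if j = k + 1 then 1 else 0)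
            + (2 * k + 1) * (if j = k then 1 else 0)
            + k * (if j + 1 = k then 1 else 0)) := by
    have := congrArg (Int.cast : ℤ → ℝ) (lag_main_sum j k)
    push_cast [apply_ite (Int.cast : ℤ → ℝ)] at this
    convert this using 2
  rw [mainR, pow_add]
  ring

/-- In the case `α = 1` the weighted Laguerre product integrals form a tridiagonal
matrix: `∫_0^∞ ξ e^{-ξ} L_j L_k dξ` equals `2j+1` if `k = j`, `-j` if `k = j-1`,
`-(j+1)` if `k = j+1`, and `0` if `|j-k| ≥ 2`. -/
theorem laguerre_weighted_product_tridiagonal (j k : ℕ) :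
    (k = j → ∫ ξ in Set.Ioi (0 : ℝ), ξ * Real.exp (-ξ) * laguerre j ξ * laguerre k ξ
        = 2 * (j : ℝ) + 1)
    ∧ (k + 1 = j → ∫ ξ in Set.Ioi (0 : ℝ), ξ * Real.exp (-ξ) * laguerre j ξ * laguerre k ξ
        = -(j : ℝ))
    ∧ (k = j + 1 → ∫ ξ in Set.Ioi (0 : ℝ), ξ * Real.exp (-ξ) * laguerre j ξ * laguerre k ξ
        = -((j : ℝ) + 1))
    ∧ (2 ≤ |(j : ℤ) - (k : ℤ)| → ∫ ξ in Set.Ioi (0 : ℝ),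
        ξ * Real.exp (-ξ) * laguerre j ξ * laguerre k ξ = 0) := by
  refine ⟨fun h => ?_, fun h => ?_, fun h => ?_, fun h => ?_⟩
  · subst h
    rw [lag_integral_eq]
    rw [if_neg (by omega), if_pos rfl, if_neg (by omega)]
    have : (-1 : ℝ) ^ (k + k) = 1 := Even.neg_one_pow ⟨k, rfl⟩
    rw [this]
    ring
  · subst h
    rw [lag_integral_eq]
    rw [if_pos rfl, if_neg (by omega), if_neg (by omega)]
    have : (-1 : ℝ) ^ (k + 1 + k) = -1 := Odd.neg_one_pow ⟨k, by ring⟩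
    rw [this]
    push_cast
    ring
  · subst h
    rw [lag_integral_eq]
    rw [if_neg (by omega), if_neg (by omega), if_pos rfl]
    have : (-1 : ℝ) ^ (j + (j + 1)) = -1 := Odd.neg_one_pow ⟨j, by ring⟩
    rw [this]
    push_cast
    ring
  · have h' : ((j : ℤ) - k ≥ 2) ∨ ((k : ℤ) - j ≥ 2) := by
      rcases abs_cases ((j : ℤ) - k) with ⟨he, _⟩ | ⟨he, _⟩ <;> omega
    rw [lag_integral_eq]
    rw [if_neg (by omega), if_neg (by omega), if_neg (by omega)]
    ring
end

section
/- Let N be a positive integer, let ζ_m ∈ ℂ for −N ≤ m ≤ N−1, and set ψ(x) = Σ_{m=−N}^{N−1} ζ_m · φ_m(x). Then for all integers j and k, ∫_ℝ |ψ(x)|² · φ_k(x) · conj(φ_j(x)) dx = ( i^{k−j} / π² ) · ∫_{−π}^{π} cos²(θ/2) · | Σ_{m=−N}^{N−1} ζ_m · i^m · e^{i m θ} |² · e^{−i(j−k)θ} dθ. In particular the Galerkin matrix of the cubic nonlinearity in the Malmquist–Takenaka basis is a Toeplitz matrix. -/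
open Complex MeasureTheory
open Set

namespace MTFaux

noncomputable def g (θ : ℝ) : ℝ := Real.tan (θ / 2) / 2

lemma cos_half_pos {θ : ℝ} (hθ : θ ∈ Set.Ioo (-Real.pi) Real.pi) : 0 < Real.cos (θ / 2) := by
  apply Real.cos_pos_of_mem_Ioo
  constructor
  · linarith [hθ.1]
  · linarith [hθ.2]

lemma one_add_eq {θ : ℝ} (hθ : θ ∈ Set.Ioo (-Real.pi) Real.pi) :
    (1 : ℂ) + 2 * Complex.I * (g θ : ℝ) =
      Complex.exp (Complex.I * θ / 2) / (Real.cos (θ / 2) : ℂ) := by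
  have hc := cos_half_pos hθ
  have hcr : Real.cos (θ / 2) ≠ 0 := hc.ne'
  have hc' : (Real.cos (θ / 2) : ℂ) ≠ 0 := by exact_mod_cast hcr
  have hc3 : Complex.cos ((θ:ℂ) / 2) ≠ 0 := by
    rw [show (θ:ℂ)/2 = ((θ/2:ℝ):ℂ) by push_cast; ring, ← Complex.ofReal_cos]; exact hc'
  unfold g
  rw [show Complex.I * θ / 2 = ((θ/2 : ℝ) : ℂ) * Complex.I by push_cast; ring,
    Complex.exp_mul_I, ← Complex.ofReal_cos, ← Complex.ofReal_sin,
    Real.tan_eq_sin_div_cos, eq_div_iff hc', Complex.ofReal_div, Complex.ofReal_div]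
  field_simp [hc3]
  push_cast; ring

lemma one_sub_eq {θ : ℝ} (hθ : θ ∈ Set.Ioo (-Real.pi) Real.pi) :
    (1 : ℂ) - 2 * Complex.I * (g θ : ℝ) =
      Complex.exp (-(Complex.I * θ / 2)) / (Real.cos (θ / 2) : ℂ) := by
  have hc := cos_half_pos hθ
  have hcr : Real.cos (θ / 2) ≠ 0 := hc.ne'
  have hc' : (Real.cos (θ / 2) : ℂ) ≠ 0 := by exact_mod_cast hcr
  have hc3 : Complex.cos ((θ:ℂ) / 2) ≠ 0 := by
    rw [show (θ:ℂ)/2 = ((θ/2:ℝ):ℂ) by push_cast; ring, ← Complex.ofReal_cos]; exact hc'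
  unfold g
  rw [show -(Complex.I * θ / 2) = ((-(θ/2) : ℝ) : ℂ) * Complex.I by push_cast; ring,
    Complex.exp_mul_I, ← Complex.ofReal_cos, ← Complex.ofReal_sin,
    Real.cos_neg, Real.sin_neg,
    Real.tan_eq_sin_div_cos, eq_div_iff hc', Complex.ofReal_div, Complex.ofReal_div]
  field_simp [hc3]
  push_cast; ring

lemma mtf_eq (n : ℤ) {θ : ℝ} (hθ : θ ∈ Set.Ioo (-Real.pi) Real.pi) :
    mtf n (g θ) =
      ((Real.sqrt (2 / Real.pi) : ℂ) * (Real.cos (θ / 2) : ℂ) *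
        Complex.exp (Complex.I * θ / 2)) * (Complex.I ^ n * Complex.exp (Complex.I * n * θ)) := by
  have hc := cos_half_pos hθ
  have hc' : (Real.cos (θ / 2) : ℂ) ≠ 0 := by exact_mod_cast hc.ne'
  have key : Complex.exp ((n:ℂ) * (Complex.I * θ / 2)) /
      Complex.exp ((((n+1 : ℤ)):ℂ) * (-(Complex.I * θ / 2))) =
      Complex.exp (Complex.I * θ / 2) * Complex.exp (Complex.I * n * θ) := by
    rw [← Complex.exp_sub, ← Complex.exp_add]
    congr 1
    push_cast
    ring
  have keyc : (Real.cos (θ / 2) : ℂ) ^ (n+1) / (Real.cos (θ / 2) : ℂ) ^ n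
      = (Real.cos (θ / 2) : ℂ) := by
    rw [← zpow_sub₀ hc']
    simp
  unfold mtf
  rw [one_add_eq hθ, one_sub_eq hθ, div_zpow, div_zpow, ← Complex.exp_int_mul,
    ← Complex.exp_int_mul, mul_div_assoc, div_div_div_comm, key, div_div_eq_mul_div,
    mul_div_assoc, keyc]
  push_cast
  ring

end MTFaux

namespace MTFaux2
open MTFaux

lemma sum_eq (s : Finset ℤ) (ζ : ℤ → ℂ) {θ : ℝ} (hθ : θ ∈ Set.Ioo (-Real.pi) Real.pi) :
    ∑ m ∈ s, ζ m * mtf m (g θ) =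
      ((Real.sqrt (2 / Real.pi) : ℂ) * (Real.cos (θ / 2) : ℂ) *
        Complex.exp (Complex.I * θ / 2)) *
        ∑ m ∈ s, ζ m * Complex.I ^ m * Complex.exp (Complex.I * m * θ) := by
  rw [Finset.mul_sum]
  refine Finset.sum_congr rfl fun m _ => ?_
  rw [mtf_eq m hθ]
  ring

lemma abs_sum_sq (s : Finset ℤ) (ζ : ℤ → ℂ) {θ : ℝ} (hθ : θ ∈ Set.Ioo (-Real.pi) Real.pi) :
    (‖∑ m ∈ s, ζ m * mtf m (g θ)‖) ^ 2 =
      2 / Real.pi * Real.cos (θ / 2) ^ 2 *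
        (‖∑ m ∈ s, ζ m * Complex.I ^ m * Complex.exp (Complex.I * m * θ)‖) ^ 2 := by
  have hc := cos_half_pos hθ
  rw [sum_eq s ζ hθ]
  rw [norm_mul, norm_mul, norm_mul]
  rw [Complex.norm_real, Complex.norm_real, Real.norm_eq_abs, Real.norm_eq_abs, Complex.norm_exp]
  have h1 : |Real.sqrt (2 / Real.pi)| = Real.sqrt (2 / Real.pi) := abs_of_nonneg (Real.sqrt_nonneg _)
  have h2 : |Real.cos (θ / 2)| = Real.cos (θ / 2) := abs_of_pos hc
  have h3 : (Complex.I * θ / 2).re = 0 := by simp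
  rw [h1, h2, h3, Real.exp_zero]
  have h4 : Real.sqrt (2 / Real.pi) ^ 2 = 2 / Real.pi :=
    Real.sq_sqrt (by positivity)
  rw [mul_one, mul_pow, mul_pow, h4]

end MTFaux2

namespace MTFaux3
open MTFaux MTFaux2

lemma pointwise (ζ : ℤ → ℂ) (s : Finset ℤ) (j k : ℤ) {θ : ℝ}
    (hθ : θ ∈ Set.Ioo (-Real.pi) Real.pi) :
    |1 / (4 * Real.cos (θ / 2) ^ 2)| •
      (((‖∑ m ∈ s, ζ m * mtf m (g θ)‖) ^ 2 : ℂ) * mtf k (g θ) *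
        (starRingEnd ℂ) (mtf j (g θ))) =
      (Complex.I ^ (k - j) / ((Real.pi : ℂ)) ^ 2) *
        ((((Real.cos (θ / 2)) ^ 2 : ℝ) : ℂ) *
          ((‖∑ m ∈ s, ζ m * Complex.I ^ m *
              Complex.exp (Complex.I * m * θ)‖) ^ 2 : ℝ) *
          Complex.exp (-Complex.I * ((j : ℂ) - k) * θ)) := by
  have hc := cos_half_pos hθ
  have hc' : (Real.cos (θ / 2) : ℂ) ≠ 0 := by exact_mod_cast hc.ne'
  have hπ : (Real.pi : ℂ) ≠ 0 := by exact_mod_cast Real.pi_ne_zero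
  have hE1 : Complex.exp (Complex.I * θ / 2) ≠ 0 := Complex.exp_ne_zero _
  have hEj : Complex.exp (Complex.I * (j:ℂ) * θ) ≠ 0 := Complex.exp_ne_zero _
  have hIj : Complex.I ^ j ≠ 0 := zpow_ne_zero _ Complex.I_ne_zero
  -- abs of the sum
  have habs : ((‖∑ m ∈ s, ζ m * mtf m (g θ)‖ : ℝ) : ℂ) ^ 2 =
      ((2 / Real.pi * Real.cos (θ / 2) ^ 2 *
        (‖∑ m ∈ s, ζ m * Complex.I ^ m *
            Complex.exp (Complex.I * m * θ)‖) ^ 2 : ℝ) : ℂ) := by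
    rw [← Complex.ofReal_pow, abs_sum_sq s ζ hθ]
  -- conjugates
  have e1 : (starRingEnd ℂ) (Complex.exp (Complex.I * θ / 2)) =
      (Complex.exp (Complex.I * θ / 2))⁻¹ := by
    rw [← Complex.exp_conj, ← Complex.exp_neg]
    congr 1
    simp only [map_div₀, map_mul, Complex.conj_I, Complex.conj_ofReal, map_ofNat]
    ring
  have e2 : (starRingEnd ℂ) (Complex.exp (Complex.I * (j:ℂ) * θ)) =
      (Complex.exp (Complex.I * (j:ℂ) * θ))⁻¹ := by
    rw [← Complex.exp_conj, ← Complex.exp_neg]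
    congr 1
    simp only [map_mul, Complex.conj_I, Complex.conj_ofReal, map_intCast]
    ring
  have e3 : (starRingEnd ℂ) (Complex.I ^ j) = (Complex.I ^ j)⁻¹ := by
    rw [map_zpow₀, Complex.conj_I, ← Complex.inv_I, inv_zpow]
  -- rhs exponential split
  have e4 : Complex.exp (-Complex.I * ((j : ℂ) - k) * θ) =
      Complex.exp (Complex.I * (k:ℂ) * θ) * (Complex.exp (Complex.I * (j:ℂ) * θ))⁻¹ := by
    rw [← Complex.exp_neg, ← Complex.exp_add]
    congr 1
    ring
  have e5 : Complex.I ^ (k - j) = Complex.I ^ k * (Complex.I ^ j)⁻¹ := by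
    rw [zpow_sub₀ Complex.I_ne_zero, div_eq_mul_inv]
  have hrr : ((Real.sqrt (2 / Real.pi) : ℝ) : ℂ) * ((Real.sqrt (2 / Real.pi) : ℝ) : ℂ)
      = 2 / (Real.pi : ℂ) := by
    rw [← Complex.ofReal_mul, Real.mul_self_sqrt (by positivity)]
    push_cast
    ring
  -- product of mtf k and conj of mtf j
  have hprod : mtf k (g θ) * (starRingEnd ℂ) (mtf j (g θ)) =
      2 / (Real.pi : ℂ) * (Real.cos (θ / 2) : ℂ) ^ 2 *
        (Complex.I ^ k * (Complex.I ^ j)⁻¹) *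
        (Complex.exp (Complex.I * (k:ℂ) * θ) * (Complex.exp (Complex.I * (j:ℂ) * θ))⁻¹) := by
    rw [mtf_eq k hθ, mtf_eq j hθ, map_mul, map_mul, map_mul, map_mul, e1, e2, e3,
      Complex.conj_ofReal, Complex.conj_ofReal]
    have h1inv : Complex.exp (Complex.I * θ / 2) * (Complex.exp (Complex.I * θ / 2))⁻¹ = 1 :=
      mul_inv_cancel₀ hE1
    linear_combination ((Real.cos (θ / 2) : ℂ))^2 * (Complex.I ^ k * (Complex.I ^ j)⁻¹) *
        (Complex.exp (Complex.I * (k:ℂ) * θ) * (Complex.exp (Complex.I * (j:ℂ) * θ))⁻¹) *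
        (Complex.exp (Complex.I * θ / 2) * (Complex.exp (Complex.I * θ / 2))⁻¹) * hrr +
      2 / (Real.pi : ℂ) * ((Real.cos (θ / 2) : ℂ))^2 * (Complex.I ^ k * (Complex.I ^ j)⁻¹) *
        (Complex.exp (Complex.I * (k:ℂ) * θ) * (Complex.exp (Complex.I * (j:ℂ) * θ))⁻¹) * h1inv
  have habs' : |1 / (4 * Real.cos (θ / 2) ^ 2)| = 1 / (4 * Real.cos (θ / 2) ^ 2) :=
    abs_of_pos (by positivity)
  rw [habs', Complex.real_smul, mul_assoc, hprod, habs, e4, e5]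
  push_cast
  field_simp
  have hc3 : Complex.cos ((θ:ℂ)/2) ≠ 0 := by
    rw [show (θ:ℂ)/2 = ((θ/2:ℝ):ℂ) by push_cast; ring, ← Complex.ofReal_cos]; exact hc'
  have hc4 : Complex.cos ((θ:ℂ)*(1/2)) ≠ 0 := by
    rw [show (θ:ℂ)*(1/2) = ((θ/2:ℝ):ℂ) by push_cast; ring, ← Complex.ofReal_cos]; exact hc'
  ring

end MTFaux3

namespace MTFaux4
open MTFaux MTFaux2 MTFaux3

lemma hasDeriv {θ : ℝ} (hθ : θ ∈ Set.Ioo (-Real.pi) Real.pi) :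
    HasDerivAt g (1 / (4 * Real.cos (θ / 2) ^ 2)) θ := by
  have hc := cos_half_pos hθ
  have h1 : HasDerivAt (fun t : ℝ => t / 2) (1 / 2) θ := by
    simpa using (hasDerivAt_id θ).div_const 2
  have h2 : HasDerivAt Real.tan (1 / Real.cos (θ / 2) ^ 2) (θ / 2) :=
    Real.hasDerivAt_tan hc.ne'
  have h3 := (h2.comp θ h1).div_const 2
  have e : (1 / (4 * Real.cos (θ / 2) ^ 2)) = 1 / Real.cos (θ / 2) ^ 2 * (1 / 2) / 2 := by ring
  rw [e]
  exact h3

lemma injOn : Set.InjOn g (Set.Ioo (-Real.pi) Real.pi) := by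
  intro a ha b hb hab
  have h1 : Real.tan (a / 2) = Real.tan (b / 2) := by
    unfold g at hab
    linarith
  have h2 : a / 2 = b / 2 := by
    apply Real.injOn_tan _ _ h1
    · constructor <;> [linarith [ha.1]; linarith [ha.2]]
    · constructor <;> [linarith [hb.1]; linarith [hb.2]]
  linarith

lemma image_eq : g '' Set.Ioo (-Real.pi) Real.pi = Set.univ := by
  ext y
  simp only [Set.mem_image, Set.mem_univ, iff_true]
  refine ⟨2 * Real.arctan (2 * y), ?_, ?_⟩
  · constructor
    · linarith [Real.neg_pi_div_two_lt_arctan (2 * y)]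
    · linarith [Real.arctan_lt_pi_div_two (2 * y)]
  · unfold g
    rw [show 2 * Real.arctan (2 * y) / 2 = Real.arctan (2 * y) by ring, Real.tan_arctan]
    ring

end MTFaux4

/-- Toeplitz form of the Galerkin matrix of the cubic nonlinearity in the
Malmquist–Takenaka basis. -/
theorem mtf_cubic_toeplitz (N : ℕ) (hN : 0 < N) (ζ : ℤ → ℂ)
    (ψ : ℝ → ℂ) (hψ : ∀ x : ℝ, ψ x = ∑ m ∈ Finset.Icc (-(N : ℤ)) ((N : ℤ) - 1), ζ m * mtf m x)
    (j k : ℤ) :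
    ∫ x : ℝ, ((‖ψ x‖) ^ 2 : ℂ) * mtf k x * (starRingEnd ℂ) (mtf j x) =
      (Complex.I ^ (k - j) / ((Real.pi : ℂ)) ^ 2) *
        ∫ θ in (-Real.pi)..Real.pi,
          (((Real.cos (θ / 2)) ^ 2 : ℝ) : ℂ) *
            ((‖∑ m ∈ Finset.Icc (-(N : ℤ)) ((N : ℤ) - 1),
                ζ m * Complex.I ^ m * Complex.exp (Complex.I * m * θ)‖) ^ 2 : ℝ) *
            Complex.exp (-Complex.I * ((j : ℂ) - k) * θ) := by
  have hpi := Real.pi_pos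
  set s : Finset ℤ := Finset.Icc (-(N : ℤ)) ((N : ℤ) - 1) with hs
  simp only [hψ]
  rw [← MeasureTheory.setIntegral_univ, ← MTFaux4.image_eq,
    MeasureTheory.integral_image_eq_integral_abs_deriv_smul measurableSet_Ioo
      (fun θ hθ => (MTFaux4.hasDeriv hθ).hasDerivWithinAt) MTFaux4.injOn,
    MeasureTheory.setIntegral_congr_fun measurableSet_Ioo
      (fun θ hθ => MTFaux3.pointwise ζ s j k hθ),
    MeasureTheory.integral_const_mul,
    intervalIntegral.integral_of_le (by linarith),
    MeasureTheory.integral_Ioc_eq_integral_Ioo]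
end
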